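/- arXiv:1509.08659 — 14 statements merged into one kernel-verified Lean document; each statement's English description precedes it below -/
import Mathlib

section
/- Let X be an infinite chain and α : X → X an order-preserving map. If there exist x⁺ ∈ X^+ and x⁻ ∈ X^- with α(x⁺) = x⁻, then |Im(α)| < |X|. -/
theorem stmt_2 {X : Type*} [LinearOrder X] [Infinite X] (α : X → X) (hα : Monotone α)
    (xp xm : X) (hxp : Cardinal.mk ↥(Set.Ici xp) < Cardinal.mk X)
    (hxm : Cardinal.mk ↥(Set.Iic xm) < Cardinal.mk X) (h : α xp = xm) :
    Cardinal.mk ↥(Set.range α) < Cardinal.mk X := by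
  have h1 : Set.range α ⊆ Set.Iic xm ∪ α '' Set.Ici xp := by
    rintro _ ⟨x, rfl⟩
    rcases le_total x xp with hx | hx
    · exact Or.inl (h ▸ hα hx)
    · exact Or.inr ⟨x, hx, rfl⟩
  calc Cardinal.mk ↥(Set.range α)
      ≤ Cardinal.mk ↥(Set.Iic xm ∪ α '' Set.Ici xp) := Cardinal.mk_le_mk_of_subset h1
    _ ≤ Cardinal.mk ↥(Set.Iic xm) + Cardinal.mk ↥(α '' Set.Ici xp) := Cardinal.mk_union_le _ _
    _ < Cardinal.mk X := Cardinal.add_lt_of_lt (Cardinal.aleph0_le_mk X) hxm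
        (lt_of_le_of_lt Cardinal.mk_image_le hxp)
end

section
/- Let X be an infinite chain and α : X → X an order-preserving map. If there exist x⁻ ∈ X^- and x⁺ ∈ X^+ with α(x⁻) = x⁺, then |Im(α)| < |X|. -/
theorem stmt_3 {X : Type*} [LinearOrder X] [Infinite X] (α : X → X) (hα : Monotone α)
    (xm xp : X) (hxm : Cardinal.mk ↥(Set.Iic xm) < Cardinal.mk X)
    (hxp : Cardinal.mk ↥(Set.Ici xp) < Cardinal.mk X) (h : α xm = xp) :
    Cardinal.mk ↥(Set.range α) < Cardinal.mk X := by
  have hsub : Set.range α ⊆ (α '' Set.Iic xm) ∪ Set.Ici xp := by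
    rintro _ ⟨x, rfl⟩
    rcases le_total x xm with hx | hx
    · exact Or.inl ⟨x, hx, rfl⟩
    · exact Or.inr (h ▸ hα hx)
  calc Cardinal.mk ↥(Set.range α)
      ≤ Cardinal.mk ↥((α '' Set.Iic xm) ∪ Set.Ici xp) := Cardinal.mk_le_mk_of_subset hsub
    _ ≤ Cardinal.mk ↥(α '' Set.Iic xm) + Cardinal.mk ↥(Set.Ici xp) := Cardinal.mk_union_le _ _
    _ < Cardinal.mk X := Cardinal.add_lt_of_lt (Cardinal.infinite_iff.mp inferInstance)
        (lt_of_le_of_lt (Cardinal.mk_image_le) hxm) hxp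
end

section
/- Let X be an infinite chain with X^0 = ∅, and let α = α₁α₂⋯αₙ be a composition of order-preserving maps of X such that α(x⁺) = x⁻ for some x⁺ ∈ X^+ and x⁻ ∈ X^-. Then there exists i ∈ {1,…,n} with |Im(α)| ≤ |Im(αᵢ)| < |X|. -/
/-!
Every point of `X` lies in `X^+` or `X^-` (as `X^0 = ∅`), and no point lies in both, since
`X = (-∞, x] ∪ [x, ∞)` is not a union of two sets of smaller cardinality. Following `x⁺` through
the factors of `α`, the path starts in `X^+ \ X^-` and ends in `X^-`, so some factor `αᵢ` maps a
point `z ∈ X^+` into `X^-`. By monotonicity `Im(αᵢ) ⊆ (-∞, αᵢ z] ∪ αᵢ [z, ∞)`, which is small;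
and `|Im(α)| ≤ |Im(αᵢ)|` holds for any factor of a composition.
-/

open Set Cardinal

theorem exists_mem_apply_mem_of_foldr_comp_apply_mem {α : Type*} {P M : Set α}
    (hcover : ∀ y, y ∈ P ∨ y ∈ M) {x : α} (hxP : x ∈ P) (hxM : x ∉ M) :
    ∀ {l : List (α → α)}, l.foldr (· ∘ ·) id x ∈ M → ∃ f ∈ l, ∃ z ∈ P, f z ∈ M
  | [], hM => absurd hM hxM
  | g :: t, hM => by
    rcases hcover (t.foldr (· ∘ ·) id x) with hP | hM'
    · exact ⟨g, List.mem_cons_self, _, hP, hM⟩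
    · obtain ⟨f, hf, hfz⟩ := exists_mem_apply_mem_of_foldr_comp_apply_mem hcover hxP hxM hM'
      exact ⟨f, List.mem_cons_of_mem g hf, hfz⟩

theorem mk_range_foldr_comp_le {α : Type*} {l : List (α → α)} {f : α → α} (hf : f ∈ l) :
    #(range (l.foldr (· ∘ ·) id)) ≤ #(range f) := by
  induction l with
  | nil => simp at hf
  | cons g t ih =>
    rcases List.mem_cons.mp hf with rfl | hf
    · exact mk_le_mk_of_subset (range_comp_subset_range (t.foldr (· ∘ ·) id) _)
    · calc #(range (g ∘ t.foldr (· ∘ ·) id)) = #(g '' range (t.foldr (· ∘ ·) id)) := by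
            rw [range_comp]
        _ ≤ #(range (t.foldr (· ∘ ·) id)) := mk_image_le
        _ ≤ #(range f) := ih hf

theorem mk_Ici_lt_or_mk_Iic_lt {X : Type*} [LinearOrder X] {x : X}
    (hx : ¬ (#(Iic x) = #X ∧ #(Ici x) = #X)) : #(Ici x) < #X ∨ #(Iic x) < #X := by
  contrapose! hx
  exact ⟨(mk_set_le _).antisymm hx.2, (mk_set_le _).antisymm hx.1⟩

section Infinite

variable {X : Type*} [Infinite X]

theorem mk_union_lt_of_infinite {s t : Set X} (hs : #s < #X) (ht : #t < #X) :
    #(s ∪ t : Set X) < #X :=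
  (mk_union_le s t).trans_lt (add_lt_of_lt (infinite_iff.mp ‹_›) hs ht)

variable [LinearOrder X]

theorem not_mk_Ici_lt_and_mk_Iic_lt (x : X) : ¬ (#(Ici x) < #X ∧ #(Iic x) < #X) := by
  rintro ⟨hIci, hIic⟩
  have h := mk_union_lt_of_infinite hIic hIci
  rw [Iic_union_Ici, mk_univ] at h
  exact h.false

theorem mk_range_lt_of_monotone {f : X → X} (hf : Monotone f) {z : X} (hz : #(Ici z) < #X)
    (hfz : #(Iic (f z)) < #X) : #(range f) < #X := by
  have hsub : range f ⊆ Iic (f z) ∪ f '' Ici z := by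
    rintro _ ⟨y, rfl⟩
    rcases le_total y z with hy | hy
    · exact Or.inl (hf hy)
    · exact Or.inr ⟨y, hy, rfl⟩
  exact (mk_le_mk_of_subset hsub).trans_lt
    (mk_union_lt_of_infinite hfz (mk_image_le.trans_lt hz))

end Infinite

theorem stmt_4_general {X : Type*} [LinearOrder X] [Infinite X]
    (hX0 : ∀ x : X, ¬ (Cardinal.mk ↥(Set.Iic x) = Cardinal.mk X ∧
      Cardinal.mk ↥(Set.Ici x) = Cardinal.mk X))
    (l : List (X → X)) (hmono : ∀ f ∈ l, Monotone f)
    (α : X → X) (hα : α = l.foldr (· ∘ ·) id)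
    (xp xm : X) (hxp : Cardinal.mk ↥(Set.Ici xp) < Cardinal.mk X)
    (hxm : Cardinal.mk ↥(Set.Iic xm) < Cardinal.mk X) (h : α xp = xm) :
    ∃ f ∈ l, Cardinal.mk ↥(Set.range α) ≤ Cardinal.mk ↥(Set.range f) ∧
      Cardinal.mk ↥(Set.range f) < Cardinal.mk X := by
  subst hα h
  obtain ⟨f, hf, z, hz, hfz⟩ :=
    exists_mem_apply_mem_of_foldr_comp_apply_mem (P := {y | #(Ici y) < #X})
      (M := {y | #(Iic y) < #X}) (fun y => mk_Ici_lt_or_mk_Iic_lt (hX0 y)) hxp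
      (fun hxp' => not_mk_Ici_lt_and_mk_Iic_lt xp ⟨hxp, hxp'⟩) hxm
  exact ⟨f, hf, mk_range_foldr_comp_le hf, mk_range_lt_of_monotone (hmono f hf) hz hfz⟩

theorem stmt_4 {X : Type*} [LinearOrder X] [Infinite X]
    (hX0 : ∀ x : X, ¬ (Cardinal.mk ↥(Set.Iic x) = Cardinal.mk X ∧
      Cardinal.mk ↥(Set.Ici x) = Cardinal.mk X))
    (l : List (X → X)) (hl : l ≠ []) (hmono : ∀ f ∈ l, Monotone f)
    (α : X → X) (hα : α = l.foldr (· ∘ ·) id)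
    (xp xm : X) (hxp : Cardinal.mk ↥(Set.Ici xp) < Cardinal.mk X)
    (hxm : Cardinal.mk ↥(Set.Iic xm) < Cardinal.mk X) (h : α xp = xm) :
    ∃ f ∈ l, Cardinal.mk ↥(Set.range α) ≤ Cardinal.mk ↥(Set.range f) ∧
      Cardinal.mk ↥(Set.range f) < Cardinal.mk X :=
  stmt_4_general hX0 l hmono α hα xp xm hxp hxm h
end

section
/- Let X be an infinite chain with X^0 = ∅, and let α be an order-preserving self-map of X such that α(X^+) ∩ X^- ≠ ∅ or α(X^-) ∩ X^+ ≠ ∅. Then α is not in the subsemigroup generated by J = {β ∈ O(X) : |Im(β)| = |X|}. -/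
/-!
Call `x` a bottom point if `Iic x` is smaller than `X`, and a top point if `Ici x` is. A monotone
`β` with image of size `|X|` cannot send a top point `x` to a bottom point: its image would lie in
`Iic (β x) ∪ β '' Ici x`, a union of two small sets. When every point is bottom or top, such a `β`
therefore preserves top points and bottom points, and so does every product of such maps. As no
point of an infinite chain is both bottom and top, `α` is no such product.
-/

open Cardinal Set

namespace Order

variable {X : Type*} [LinearOrder X]

/-- The paper's `X⁻`. -/
def bottomPart (X : Type*) [LinearOrder X] : Set X := {x | #(Iic x) < #X}

/-- The paper's `X⁺`. -/
def topPart (X : Type*) [LinearOrder X] : Set X := {x | #(Ici x) < #X}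

theorem disjoint_bottomPart_topPart [Infinite X] : Disjoint (bottomPart X) (topPart X) := by
  refine Set.disjoint_left.mpr fun x hbot htop => ?_
  have hcover : #X ≤ #(Iic x) + #(Ici x) := by
    simpa only [Iic_union_Ici, mk_univ] using mk_union_le (Iic x) (Ici x)
  exact (hcover.trans_lt (add_lt_of_lt (aleph0_le_mk X) hbot htop)).false

theorem bottomPart_union_topPart
    (hX0 : ∀ x : X, ¬ (#(Iic x) = #X ∧ #(Ici x) = #X)) :
    bottomPart X ∪ topPart X = Set.univ := by
  refine eq_univ_of_forall fun x => or_iff_not_imp_left.mpr fun hbot => ?_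
  have hIic : #(Iic x) = #X := (mk_set_le _).antisymm (not_lt.mp hbot)
  exact (mk_set_le _).lt_of_ne fun hIci => hX0 x ⟨hIic, hIci⟩

theorem _root_.Monotone.mapsTo_topPart_compl_bottomPart [Infinite X] {β : X → X}
    (hβ : Monotone β) (hrange : #(range β) = #X) :
    MapsTo β (topPart X) (bottomPart X)ᶜ := by
  intro x htop hbot
  have hsub : range β ⊆ Iic (β x) ∪ β '' Ici x := by
    rintro _ ⟨z, rfl⟩
    rcases le_total z x with hzx | hxz
    · exact Or.inl (hβ hzx)
    · exact Or.inr ⟨z, hxz, rfl⟩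
  have hsmall : #(range β) < #X :=
    calc #(range β) ≤ #(Iic (β x)) + #(β '' Ici x) :=
          (mk_le_mk_of_subset hsub).trans (mk_union_le _ _)
      _ ≤ #(Iic (β x)) + #(Ici x) := add_le_add_right mk_image_le _
      _ < #X := add_lt_of_lt (aleph0_le_mk X) hbot htop
  exact hsmall.ne hrange

theorem _root_.Monotone.mapsTo_bottomPart_compl_topPart [Infinite X] {β : X → X}
    (hβ : Monotone β) (hrange : #(range β) = #X) :
    MapsTo β (bottomPart X) (topPart X)ᶜ :=
  -- In `Xᵒᵈ` top and bottom points swap, definitionally.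
  haveI : Infinite Xᵒᵈ := ‹Infinite X›
  hβ.dual.mapsTo_topPart_compl_bottomPart (β := OrderDual.toDual ∘ β ∘ OrderDual.ofDual) hrange

theorem _root_.Monotone.mapsTo_topPart [Infinite X]
    (hX0 : ∀ x : X, ¬ (#(Iic x) = #X ∧ #(Ici x) = #X)) {β : X → X}
    (hβ : Monotone β) (hrange : #(range β) = #X) : MapsTo β (topPart X) (topPart X) :=
  (hβ.mapsTo_topPart_compl_bottomPart hrange).mono_right <|
    compl_subset_iff_union.mpr (bottomPart_union_topPart hX0)

theorem _root_.Monotone.mapsTo_bottomPart [Infinite X]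
    (hX0 : ∀ x : X, ¬ (#(Iic x) = #X ∧ #(Ici x) = #X)) {β : X → X}
    (hβ : Monotone β) (hrange : #(range β) = #X) : MapsTo β (bottomPart X) (bottomPart X) :=
  (hβ.mapsTo_bottomPart_compl_topPart hrange).mono_right <|
    compl_subset_iff_union.mpr (union_comm (bottomPart X) _ ▸ bottomPart_union_topPart hX0)

end Order

theorem Set.mapsTo_foldr_comp {α : Type*} {s : Set α} (l : List (α → α))
    (hl : ∀ f ∈ l, MapsTo f s s) : MapsTo (l.foldr (· ∘ ·) id) s s := by
  induction l with
  | nil => exact mapsTo_id s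
  | cons f l ih =>
    exact (hl f List.mem_cons_self).comp (ih fun g hg => hl g (List.mem_cons_of_mem f hg))

open Order in
theorem stmt_5_general {X : Type*} [LinearOrder X] [Infinite X]
    (hX0 : ∀ x : X, ¬ (Cardinal.mk ↥(Set.Iic x) = Cardinal.mk X ∧
      Cardinal.mk ↥(Set.Ici x) = Cardinal.mk X))
    (α : X → X)
    (h : (∃ x : X, Cardinal.mk ↥(Set.Ici x) < Cardinal.mk X ∧
            Cardinal.mk ↥(Set.Iic (α x)) < Cardinal.mk X) ∨
         (∃ x : X, Cardinal.mk ↥(Set.Iic x) < Cardinal.mk X ∧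
            Cardinal.mk ↥(Set.Ici (α x)) < Cardinal.mk X)) :
    ¬ ∃ l : List (X → X), l ≠ [] ∧
      (∀ f ∈ l, Monotone f ∧ Cardinal.mk ↥(Set.range f) = Cardinal.mk X) ∧
      α = l.foldr (· ∘ ·) id := by
  rintro ⟨l, -, hl, rfl⟩
  have htop : MapsTo (l.foldr (· ∘ ·) id) (topPart X) (topPart X) :=
    mapsTo_foldr_comp l fun f hf => (hl f hf).1.mapsTo_topPart hX0 (hl f hf).2
  have hbot : MapsTo (l.foldr (· ∘ ·) id) (bottomPart X) (bottomPart X) :=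
    mapsTo_foldr_comp l fun f hf => (hl f hf).1.mapsTo_bottomPart hX0 (hl f hf).2
  rcases h with ⟨x, hx, hαx⟩ | ⟨x, hx, hαx⟩
  · exact disjoint_bottomPart_topPart.notMem_of_mem_left hαx (htop hx)
  · exact disjoint_bottomPart_topPart.notMem_of_mem_left (hbot hx) hαx

theorem stmt_5 {X : Type*} [LinearOrder X] [Infinite X]
    (hX0 : ∀ x : X, ¬ (Cardinal.mk ↥(Set.Iic x) = Cardinal.mk X ∧
      Cardinal.mk ↥(Set.Ici x) = Cardinal.mk X))
    (α : X → X) (hα : Monotone α)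
    (h : (∃ x : X, Cardinal.mk ↥(Set.Ici x) < Cardinal.mk X ∧
            Cardinal.mk ↥(Set.Iic (α x)) < Cardinal.mk X) ∨
         (∃ x : X, Cardinal.mk ↥(Set.Iic x) < Cardinal.mk X ∧
            Cardinal.mk ↥(Set.Ici (α x)) < Cardinal.mk X)) :
    ¬ ∃ l : List (X → X), l ≠ [] ∧
      (∀ f ∈ l, Monotone f ∧ Cardinal.mk ↥(Set.range f) = Cardinal.mk X) ∧
      α = l.foldr (· ∘ ·) id :=
  stmt_5_general hX0 α h
end

section
/- Let X be a chain, α : X → X order-preserving, and b ∈ Im(α). If there is no element c ∈ X with c < a for all a ∈ α⁻¹(b), then Im(α) ⊆ [b) = {y : b ≤ y}. -/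
theorem stmt_6 {X : Type*} [LinearOrder X] (α : X → X) (hα : Monotone α)
    (b : X) (hb : b ∈ Set.range α)
    (h : ¬ ∃ c : X, ∀ a : X, α a = b → c < a) :
    ∀ y ∈ Set.range α, b ≤ y := by
  rintro y ⟨x, rfl⟩
  by_contra hlt
  push_neg at hlt
  exact h ⟨x, fun a ha => lt_of_not_ge fun hax =>
    absurd ((hα hax).trans_lt hlt) (by simp [ha])⟩
end

section
/- Let X be an infinite chain, α an order-preserving self-map of X with |Im(α)| = |X|, and b ∈ Im(α) ∩ X^+. Then there exists c ∈ X with c < a for all a ∈ α⁻¹(b). -/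
theorem stmt_7 {X : Type*} [LinearOrder X] [Infinite X] (α : X → X) (hα : Monotone α)
    (hJ : Cardinal.mk ↥(Set.range α) = Cardinal.mk X)
    (b : X) (hb : b ∈ Set.range α) (hbp : Cardinal.mk ↥(Set.Ici b) < Cardinal.mk X) :
    ∃ c : X, ∀ a : X, α a = b → c < a := by
  by_contra h
  push_neg at h
  have hsub : Set.range α ⊆ Set.Ici b := by
    rintro _ ⟨x, rfl⟩
    obtain ⟨a, ha, hax⟩ := h x
    exact le_trans (le_of_eq ha.symm) (hα hax)
  have hle := Cardinal.mk_le_mk_of_subset hsub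
  rw [hJ] at hle
  exact absurd (lt_of_le_of_lt hle hbp) (lt_irrefl _)
end

section
/- Let X be an infinite chain with X = X^+ (i.e., every principal up-set has cardinality strictly less than |X|). Let α, β be order-preserving self-maps of X with |Im(α)| = |Im(β)| = |X|, and let b ∈ Im(α). Then there exist c ∈ X and b' ∈ Im(β) such that b' < c and c < a for all a ∈ α⁻¹(b). -/
theorem stmt_9 {X : Type*} [LinearOrder X] [Infinite X]
    (hXp : ∀ x : X, Cardinal.mk ↥(Set.Ici x) < Cardinal.mk X)
    (α β : X → X) (hα : Monotone α) (hβ : Monotone β)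
    (hJα : Cardinal.mk ↥(Set.range α) = Cardinal.mk X)
    (hJβ : Cardinal.mk ↥(Set.range β) = Cardinal.mk X)
    (b : X) (hb : b ∈ Set.range α) :
    ∃ c : X, ∃ b' ∈ Set.range β, b' < c ∧ ∀ a : X, α a = b → c < a := by
  have key : ∀ (f : X → X), Cardinal.mk ↥(Set.range f) = Cardinal.mk X →
      ∀ s : X, ∃ r ∈ Set.range f, r < s := by
    intro f hf s
    by_contra h
    push_neg at h
    have hsub : Set.range f ⊆ Set.Ici s := fun r hr => h r hr
    have := (Cardinal.mk_le_mk_of_subset hsub).trans_lt (hXp s)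
    rw [hf] at this
    exact lt_irrefl _ this
  obtain ⟨v, hv, hvb⟩ := key α hJα b
  obtain ⟨c, rfl⟩ := hv
  obtain ⟨b', hb', hbc⟩ := key β hJβ c
  exact ⟨c, b', hb', hbc, fun a ha => lt_of_not_ge fun hle =>
    absurd (ha ▸ hα hle) (not_le_of_gt hvb)⟩
end

section
/- Let X be an infinite chain with X = X^+. If α is a composition of finitely many order-preserving self-maps of X each of whose images has cardinality |X|, then Im(α) has no minimum element. -/
/-! Under `|Ici x| < |X|` for every `x`, a set of cardinality `|X|` is unbounded below, since it
cannot fit inside any `Ici x`. Composing on the left with a monotone map `f` whose range is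
unbounded below preserves unboundedness below of the range: to get below `t`, pick `v` with
`f v < t`, then an argument sent below `v`. Hence the range of a finite composition is unbounded
below and in particular has no least element. -/

open Cardinal Set

theorem not_bddBelow_of_forall_mk_Ici_lt {X : Type*} [Preorder X] {s : Set X}
    (h : ∀ x : X, #(Ici x) < #s) : ¬ BddBelow s := by
  rintro ⟨x, hx⟩
  exact (mk_le_mk_of_subset hx).not_gt (h x)

section

variable {X : Type*} [LinearOrder X]

theorem not_bddBelow_range_comp {f g : X → X} (hf : Monotone f)
    (hf' : ¬ BddBelow (range f)) (hg : ¬ BddBelow (range g)) :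
    ¬ BddBelow (range (f ∘ g)) := by
  simp only [not_bddBelow_iff, exists_range_iff] at hf' hg ⊢
  intro t
  obtain ⟨v, hv⟩ := hf' t
  obtain ⟨z, hz⟩ := hg v
  exact ⟨z, (hf hz.le).trans_lt hv⟩

theorem not_bddBelow_range_foldr_comp (hX : ¬ BddBelow (univ : Set X)) {l : List (X → X)}
    (hl : ∀ f ∈ l, Monotone f ∧ ¬ BddBelow (range f)) :
    ¬ BddBelow (range (l.foldr (· ∘ ·) id)) := by
  induction l with
  | nil => simpa using hX
  | cons f l ih =>
    simp only [List.forall_mem_cons] at hl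
    rw [List.foldr_cons]
    exact not_bddBelow_range_comp hl.1.1 hl.1.2 (ih hl.2)

end

theorem stmt_10_general {X : Type*} [LinearOrder X]
    (hXp : ∀ x : X, Cardinal.mk ↥(Set.Ici x) < Cardinal.mk X)
    (l : List (X → X))
    (hJ : ∀ f ∈ l, Monotone f ∧ Cardinal.mk ↥(Set.range f) = Cardinal.mk X)
    (α : X → X) (hα : α = l.foldr (· ∘ ·) id) :
    ¬ ∃ m : X, IsLeast (Set.range α) m := by
  have hunbdd : ∀ s : Set X, #s = #X → ¬ BddBelow s := fun s hs =>
    not_bddBelow_of_forall_mk_Ici_lt (hs ▸ hXp)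
  rintro ⟨m, hm⟩
  refine not_bddBelow_range_foldr_comp (hunbdd univ mk_univ) (fun f hf => ?_) (hα ▸ hm.bddBelow)
  exact ⟨(hJ f hf).1, hunbdd _ (hJ f hf).2⟩

theorem stmt_10 {X : Type*} [LinearOrder X] [Infinite X]
    (hXp : ∀ x : X, Cardinal.mk ↥(Set.Ici x) < Cardinal.mk X)
    (l : List (X → X)) (hl : l ≠ [])
    (hJ : ∀ f ∈ l, Monotone f ∧ Cardinal.mk ↥(Set.range f) = Cardinal.mk X)
    (α : X → X) (hα : α = l.foldr (· ∘ ·) id) :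
    ¬ ∃ m : X, IsLeast (Set.range α) m :=
  stmt_10_general hXp l hJ α hα
end

section
/- Let X be an infinite chain with X = X^- (i.e., every principal down-set has cardinality strictly less than |X|). If α is a composition of finitely many order-preserving self-maps of X each with image of cardinality |X|, then Im(α) has no maximum element. -/
open Cardinal Set

/-! A subset of size `#X` is not contained in any down-set `Iic m`, so each map in the list has
cofinal range; a monotone map with cofinal range sends cofinal sets to cofinal sets, so the
composite `α` has cofinal range too. A greatest element of a cofinal set would be a top element
of `X`, whose down-set is all of `X`. -/

theorem not_bddAbove_of_forall_mk_Iic_lt {α : Type*} [Preorder α] {s : Set α}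
    (h : ∀ m : α, #(Iic m) < #s) : ¬BddAbove s :=
  fun ⟨m, hm⟩ => (h m).not_ge (mk_le_mk_of_subset hm)

theorem isCofinal_range_foldr_comp {α : Type*} [Preorder α] {l : List (α → α)}
    (hl : ∀ f ∈ l, Monotone f ∧ IsCofinal (range f)) :
    IsCofinal (range (l.foldr (· ∘ ·) id)) := by
  induction l with
  | nil => simp
  | cons f l ih =>
    obtain ⟨hf_mono, hf_cof⟩ := hl f List.mem_cons_self
    rw [List.foldr_cons, range_comp]
    exact (ih fun g hg => hl g (List.mem_cons_of_mem f hg)).image hf_mono hf_cof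

theorem stmt_11_general {X : Type*} [LinearOrder X]
    (hXm : ∀ x : X, Cardinal.mk ↥(Set.Iic x) < Cardinal.mk X)
    (l : List (X → X))
    (hJ : ∀ f ∈ l, Monotone f ∧ Cardinal.mk ↥(Set.range f) = Cardinal.mk X)
    (α : X → X) (hα : α = l.foldr (· ∘ ·) id) :
    ¬ ∃ m : X, IsGreatest (Set.range α) m := by
  have hcof : IsCofinal (range α) := by
    refine hα ▸ isCofinal_range_foldr_comp fun f hf => ⟨(hJ f hf).1, ?_⟩
    exact .of_not_bddAbove (not_bddAbove_of_forall_mk_Iic_lt fun m => (hJ f hf).2 ▸ hXm m)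
  rintro ⟨m, -, hm⟩
  have htop : IsTop m := fun x =>
    let ⟨_, hy, hxy⟩ := hcof x
    hxy.trans (hm hy)
  exact not_bddAbove_of_forall_mk_Iic_lt (s := univ) (by simpa using hXm) ⟨m, fun x _ => htop x⟩

theorem stmt_11 {X : Type*} [LinearOrder X] [Infinite X]
    (hXm : ∀ x : X, Cardinal.mk ↥(Set.Iic x) < Cardinal.mk X)
    (l : List (X → X)) (hl : l ≠ [])
    (hJ : ∀ f ∈ l, Monotone f ∧ Cardinal.mk ↥(Set.range f) = Cardinal.mk X)
    (α : X → X) (hα : α = l.foldr (· ∘ ·) id) :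
    ¬ ∃ m : X, IsGreatest (Set.range α) m :=
  stmt_11_general hXm l hJ α hα
end

section
/- Let X be an infinite chain with X^0 ≠ ∅. Then every order-preserving self-map of X with finite image is a composition of finitely many order-preserving self-maps each of whose images has cardinality |X|; that is, J_f ⊆ ⟨J⟩. -/
/-!
Fix `x₀ ∈ X⁰` and a section `e` of `α` over its image with `e (α x₀) = x₀`. The map `r = e ∘ α`
fixes `x₀`, so it is the product of the map that is `r` below `x₀` and the identity above it with
the map that is the identity below `x₀` and `r` above it; both lie in `J`. It remains to send
each of the finitely many points `e a` back to `a`. A point `p` is sent to `q` by collapsing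
`[[p, q]]` onto `q`; this map lies in `J` unless `x₀ ∈ [[p, q]]`, and then one collapses `[[p, x₀]]`
onto `x₀` and `[[x₀, q]]` onto `q` instead. Either way everything outside `[[p, q]]` is fixed, so
the points can be moved one at a time starting from the bottom: a point moving down is moved
before the points above it, a point moving up after them.
-/

open Cardinal Set Submonoid

theorem Submonoid.exists_ne_nil_list_of_mem_closure {M : Type*} [Monoid M] {s : Set M}
    (hs : 1 ∈ s) {x : M} (hx : x ∈ closure s) :
    ∃ l : List M, l ≠ [] ∧ (∀ y ∈ l, y ∈ s) ∧ l.prod = x := by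
  obtain ⟨l, hl, hprod⟩ := exists_list_of_mem_closure hx
  refine ⟨1 :: l, List.cons_ne_nil _ _, fun y hy => ?_, by rw [List.prod_cons, one_mul, hprod]⟩
  rcases List.mem_cons.1 hy with rfl | hy
  exacts [hs, hl y hy]

theorem mk_eq_of_subset_of_mk_eq {α : Type*} {s t : Set α} (hst : s ⊆ t) (h : #s = #α) :
    #t = #α :=
  le_antisymm (mk_set_le t) (h ▸ mk_le_mk_of_subset hst)

theorem exists_rightInvOn_range_apply_eq {A B : Type*} (f : A → B) (a₀ : A) :
    ∃ e : B → A, RightInvOn e f (range f) ∧ e (f a₀) = a₀ := by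
  classical
  have : Nonempty A := ⟨a₀⟩
  refine ⟨Function.update (Function.invFun f) (f a₀) a₀, ?_, by simp⟩
  rintro _ ⟨a, rfl⟩
  by_cases ha : f a = f a₀
  · simp [ha]
  · rw [Function.update_of_ne ha]
    exact Function.invFun_eq ⟨a, rfl⟩

theorem Monotone.monotone_comp_of_rightInvOn {A B : Type*} [LinearOrder A] [PartialOrder B]
    {f : A → B} {e : B → A} (hf : Monotone f) (he : RightInvOn e f (range f)) :
    Monotone (e ∘ f) := by
  intro x y hxy
  rcases (hf hxy).eq_or_lt with hxy' | hxy'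
  · exact (congrArg e hxy').le
  · by_contra! hlt
    exact hxy'.not_ge (he ⟨x, rfl⟩ ▸ he ⟨y, rfl⟩ ▸ hf hlt.le)

section

variable {X : Type*} [LinearOrder X]

theorem mk_Iio_eq_of_mk_Iic_eq [Infinite X] {x : X} (h : #(Iic x) = #X) : #(Iio x) = #X := by
  have hins : #(Iic x) = #(Iio x) + 1 := by rw [← Iio_insert, mk_insert self_notMem_Iio]
  rcases le_or_gt ℵ₀ #(Iio x) with hinf | hfin
  · rw [← h, hins, add_one_eq hinf]
  · exact absurd (h ▸ hins ▸ add_lt_aleph0 hfin one_lt_aleph0) (aleph0_le_mk X).not_gt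

theorem mk_Ioi_eq_of_mk_Ici_eq [Infinite X] {x : X} (h : #(Ici x) = #X) : #(Ioi x) = #X :=
  @mk_Iio_eq_of_mk_Iic_eq Xᵒᵈ _ ‹_› _ h

variable (X) in
/-- The paper's `J`. -/
def fullRank : Set (Function.End X) := {f | Monotone f ∧ #(range f) = #X}

theorem one_mem_fullRank : (1 : Function.End X) ∈ fullRank X := by
  change Monotone id ∧ #(range id) = #X
  exact ⟨monotone_id, by rw [range_id, mk_univ]⟩

open scoped Classical in
noncomputable def collapse (p q : X) : Function.End X := fun x => if x ∈ uIcc p q then q else x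

theorem collapse_apply_left (p q : X) : collapse p q p = q := by
  simp [collapse]

theorem collapse_of_notMem {p q x : X} (hx : x ∉ uIcc p q) : collapse p q x = x := by
  simp [collapse, hx]

theorem monotone_collapse (p q : X) : Monotone (collapse p q) := by
  intro x y hxy
  simp only [collapse, uIcc, mem_Icc]
  split_ifs with hx hy hy
  all_goals grind

theorem collapse_mem_fullRank {x₀ : X} (hlo : #(Iio x₀) = #X) (hhi : #(Ioi x₀) = #X) {p q : X}
    (h : x₀ ≤ p ⊓ q ∨ p ⊔ q ≤ x₀) : collapse p q ∈ fullRank X := by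
  refine ⟨monotone_collapse p q, ?_⟩
  have hfix : (uIcc p q)ᶜ ⊆ range (collapse p q) := fun x hx => ⟨x, collapse_of_notMem hx⟩
  rcases h with h | h
  · rw [le_inf_iff] at h
    exact mk_eq_of_subset_of_mk_eq (subset_trans (fun x (hx : x < x₀) =>
      notMem_uIcc_of_lt (hx.trans_le h.1) (hx.trans_le h.2)) hfix) hlo
  · rw [sup_le_iff] at h
    exact mk_eq_of_subset_of_mk_eq (subset_trans (fun x (hx : x₀ < x) =>
      notMem_uIcc_of_gt (h.1.trans_lt hx) (h.2.trans_lt hx)) hfix) hhi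

theorem exists_mem_closure_fullRank_apply_eq {x₀ : X} (hlo : #(Iio x₀) = #X)
    (hhi : #(Ioi x₀) = #X) (p q : X) :
    ∃ h ∈ closure (fullRank X), h p = q ∧ ∀ x ∉ uIcc p q, h x = x := by
  by_cases hx₀ : x₀ ∈ uIcc p q
  · have hpx₀ : collapse p x₀ ∈ fullRank X := collapse_mem_fullRank hlo hhi <| by
      rcases le_total x₀ p with h | h <;> simp [h]
    have hx₀q : collapse x₀ q ∈ fullRank X := collapse_mem_fullRank hlo hhi <| by
      rcases le_total x₀ q with h | h <;> simp [h]
    refine ⟨collapse x₀ q * collapse p x₀, mul_mem (subset_closure hx₀q) (subset_closure hpx₀),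
      ?_, fun x hx => ?_⟩
    · change collapse x₀ q (collapse p x₀ p) = q
      rw [collapse_apply_left, collapse_apply_left]
    · change collapse x₀ q (collapse p x₀ x) = x
      rw [collapse_of_notMem (fun h => hx (uIcc_subset_uIcc_left hx₀ h)),
        collapse_of_notMem (fun h => hx (uIcc_subset_uIcc_right hx₀ h))]
  · refine ⟨collapse p q, subset_closure (collapse_mem_fullRank hlo hhi ?_),
      collapse_apply_left p q, fun x hx => collapse_of_notMem hx⟩
    rw [uIcc, mem_Icc, not_and_or, not_le, not_le] at hx₀
    exact hx₀.imp le_of_lt le_of_lt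

theorem exists_mem_closure_fullRank_eqOn {x₀ : X} (hlo : #(Iio x₀) = #X)
    (hhi : #(Ioi x₀) = #X) (f : X → X) (s : Finset X) (hf : StrictMonoOn f s) :
    ∃ h ∈ closure (fullRank X), EqOn h f s ∧ ∀ x, (∀ a ∈ s, x < a ∧ x < f a) → h x = x := by
  classical
  induction s using Finset.induction_on_min with
  | empty => exact ⟨1, one_mem _, by rw [Finset.coe_empty]; exact eqOn_empty _ _, fun _ _ => rfl⟩
  | insert a s has ih =>
    obtain ⟨h, hh, heq, hfix⟩ := ih (hf.mono (by simp))
    obtain ⟨m, hm, hma, hmfix⟩ := exists_mem_closure_fullRank_apply_eq hlo hhi a (f a)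
    have hfa : ∀ b ∈ s, f a < f b := fun b hb =>
      hf (by simp) (by simp [hb]) (has b hb)
    rcases le_total (f a) a with hdown | hup
    · refine ⟨h * m, mul_mem hh hm, ?_, ?_⟩
      · intro b hb
        change h (m b) = f b
        rcases Finset.mem_insert.1 hb with rfl | hb
        · rw [hma, hfix _ fun c hc => ⟨hdown.trans_lt (has c hc), hfa c hc⟩]
        · rw [hmfix b (notMem_uIcc_of_gt (has b hb) (hdown.trans_lt (has b hb))), heq hb]
      · intro x hx
        obtain ⟨hxa, hxfa⟩ := hx a (by simp)
        change h (m x) = x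
        rw [hmfix x (notMem_uIcc_of_lt hxa hxfa), hfix x fun b hb => hx b (by simp [hb])]
    · refine ⟨m * h, mul_mem hm hh, ?_, ?_⟩
      · intro b hb
        change m (h b) = f b
        rcases Finset.mem_insert.1 hb with rfl | hb
        · rw [hfix _ fun c hc => ⟨has c hc, hup.trans_lt (hfa c hc)⟩, hma]
        · rw [heq hb, hmfix _ (notMem_uIcc_of_gt (hup.trans_lt (hfa b hb)) (hfa b hb))]
      · intro x hx
        obtain ⟨hxa, hxfa⟩ := hx a (by simp)
        change m (h x) = x
        rw [hfix x fun b hb => hx b (by simp [hb]), hmfix x (notMem_uIcc_of_lt hxa hxfa)]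

theorem ite_le_mem_fullRank {x₀ : X} (hlo : #(Iic x₀) = #X) {r : X → X} (hr : Monotone r)
    (hr₀ : r x₀ = x₀) : (fun x => if x ≤ x₀ then x else r x : Function.End X) ∈ fullRank X := by
  refine ⟨fun x y hxy => ?_, mk_eq_of_subset_of_mk_eq (fun x hx => ⟨x, if_pos hx⟩) hlo⟩
  dsimp only
  split_ifs with hx hy hy
  · exact hxy
  · exact hx.trans (hr₀ ▸ hr (not_le.1 hy).le)
  · exact absurd (hxy.trans hy) hx
  · exact hr hxy

theorem ite_ge_mem_fullRank {x₀ : X} (hhi : #(Ici x₀) = #X) {r : X → X} (hr : Monotone r)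
    (hr₀ : r x₀ = x₀) : (fun x => if x₀ ≤ x then x else r x : Function.End X) ∈ fullRank X := by
  refine ⟨fun x y hxy => ?_, mk_eq_of_subset_of_mk_eq (fun x hx => ⟨x, if_pos hx⟩) hhi⟩
  dsimp only
  split_ifs with hx hy hy
  · exact hxy
  · exact absurd (hx.trans hxy) hy
  · exact (hr₀ ▸ hr (not_le.1 hx).le).trans hy
  · exact hr hxy

theorem mem_closure_fullRank_of_apply_eq_self {x₀ : X} (hlo : #(Iic x₀) = #X)
    (hhi : #(Ici x₀) = #X) {r : Function.End X} (hr : Monotone r) (hr₀ : r x₀ = x₀) :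
    r ∈ closure (fullRank X) := by
  let below : Function.End X := fun x => if x ≤ x₀ then x else r x
  let above : Function.End X := fun x => if x₀ ≤ x then x else r x
  have hr_eq : r = above * below := by
    funext x
    change r x = above (below x)
    by_cases hx : x ≤ x₀
    · simp only [below, above, if_pos hx]
      split_ifs with hx'
      · rw [le_antisymm hx hx', hr₀]
      · rfl
    · simp only [below, above, if_neg hx, if_pos (hr₀ ▸ hr (not_le.1 hx).le)]
  rw [hr_eq]
  exact mul_mem (subset_closure (ite_ge_mem_fullRank hhi hr hr₀))
    (subset_closure (ite_le_mem_fullRank hlo hr hr₀))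

theorem mem_closure_fullRank_of_finite_range [Infinite X] {x₀ : X} (hlo : #(Iic x₀) = #X)
    (hhi : #(Ici x₀) = #X) {α : Function.End X} (hα : Monotone α) (hfin : (range α).Finite) :
    α ∈ closure (fullRank X) := by
  obtain ⟨e, he, he₀⟩ := exists_rightInvOn_range_apply_eq α x₀
  let r : Function.End X := e ∘ α
  have hr : r ∈ closure (fullRank X) :=
    mem_closure_fullRank_of_apply_eq_self hlo hhi (hα.monotone_comp_of_rightInvOn he) he₀
  have hinj : InjOn α (e '' range α) := by
    rintro _ ⟨_, ⟨x, rfl⟩, rfl⟩ _ ⟨_, ⟨y, rfl⟩, rfl⟩ hxy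
    rw [he ⟨x, rfl⟩, he ⟨y, rfl⟩] at hxy
    rw [hxy]
  obtain ⟨h, hh, heq, -⟩ := exists_mem_closure_fullRank_eqOn (mk_Iio_eq_of_mk_Iic_eq hlo)
    (mk_Ioi_eq_of_mk_Ici_eq hhi) α (hfin.image e).toFinset
    (by simpa using (hα.monotoneOn _).strictMonoOn_of_injOn hinj)
  have hα_eq : h * r = α := funext fun x =>
    (heq ((hfin.image e).mem_toFinset.2 ⟨α x, ⟨x, rfl⟩, rfl⟩)).trans (he ⟨x, rfl⟩)
  exact hα_eq ▸ mul_mem hh hr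

end

theorem stmt_13 {X : Type*} [LinearOrder X] [Infinite X]
    (hX0 : ∃ x : X, Cardinal.mk ↥(Set.Iic x) = Cardinal.mk X ∧
      Cardinal.mk ↥(Set.Ici x) = Cardinal.mk X)
    (α : X → X) (hα : Monotone α) (hfin : (Set.range α).Finite) :
    ∃ l : List (X → X), l ≠ [] ∧
      (∀ f ∈ l, Monotone f ∧ Cardinal.mk ↥(Set.range f) = Cardinal.mk X) ∧
      α = l.foldr (· ∘ ·) id := by
  obtain ⟨x₀, hlo, hhi⟩ := hX0
  obtain ⟨l, hne, hl, hprod⟩ := exists_ne_nil_list_of_mem_closure one_mem_fullRank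
    (mem_closure_fullRank_of_finite_range hlo hhi (α := α) hα hfin)
  exact ⟨l, hne, hl, hprod.symm⟩
end

section
/- Let X be a countably infinite chain. Then the following are equivalent: (1) O(X) is generated by J = {α ∈ O(X) : Im(α) is infinite}; (2) the relative rank rank(O(X) : J) is finite; (3) X^0 ≠ ∅. -/
/-!
Let `h` have infinitely many points on both sides. A monotone map that is the identity on one side
of `h` has infinite image, and every monotone `α` with finite image is a product of such maps.
Up to order duality `α h ≤ h`. First apply `α` on `Iic h`. The finitely many values `c < h` that
`α` takes above `h` are then brought down one at a time, in increasing order: collapse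
`{y ≥ h | α y ≤ c}` to `h`, then send `h` to `c` while fixing everything below `c`. Finally apply
`α` on `Ici h`.

If there is no such `h`, every point has finitely many points below it (these form a set `L`) or
finitely many points above it. A monotone map with infinite image maps `L` into `L`, and if `L` is
everything, its image is unbounded above; both properties are stable under composition. A product
involving one of finitely many extra maps with finite image has at most `N` values for some fixed
`N`, so a monotone retraction onto `N + 1` suitably chosen points is not generated.
-/

open Set Submonoid

namespace OrderHom

variable {X : Type*} [LinearOrder X]

variable (X) in
def infiniteRange : Set (X →o X) := {f | (range f).Infinite}

def dualMulEquiv : (X →o X) ≃* (Xᵒᵈ →o Xᵒᵈ) :=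
  { OrderHom.dual with map_mul' := fun _ _ => rfl }

lemma dual_mem_closure_iff {f : X →o X} :
    OrderHom.dual f ∈ closure (infiniteRange Xᵒᵈ) ↔ f ∈ closure (infiniteRange X) := by
  have : closure (infiniteRange Xᵒᵈ) =
      (closure (infiniteRange X)).map dualMulEquiv.toMonoidHom := by
    rw [MonoidHom.map_mclosure]
    congr 1
    ext g
    exact ⟨fun hg => ⟨OrderHom.dual.symm g, hg, rfl⟩, fun ⟨f, hf, hfg⟩ => hfg ▸ hf⟩
  rw [this, mem_map_equiv]
  rfl

section Piecewise

variable (h : X) (f : X → X)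

def piecewiseIic (hf : MonotoneOn f (Iic h)) (hfh : f h ≤ h) : X →o X where
  toFun y := if y ≤ h then f y else y
  monotone' x y hxy := by
    dsimp only
    split_ifs with hx hy hy
    · exact hf hx hy hxy
    · exact ((hf hx self_mem_Iic hx).trans hfh).trans (le_of_not_ge hy)
    · exact absurd (hxy.trans hy) hx
    · exact hxy

def piecewiseIci (hf : MonotoneOn f (Ici h)) (hfh : h ≤ f h) : X →o X where
  toFun y := if h ≤ y then f y else y
  monotone' x y hxy := by
    dsimp only
    split_ifs with hx hy hy
    · exact hf hx hy hxy
    · exact absurd (hx.trans hxy) hy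
    · exact (le_of_not_ge hx).trans (hfh.trans (hf self_mem_Ici hy hy))
    · exact hxy

variable {h f}

@[simp]
lemma piecewiseIic_apply {hf hfh} (y : X) :
    piecewiseIic h f hf hfh y = if y ≤ h then f y else y := rfl

@[simp]
lemma piecewiseIci_apply {hf hfh} (y : X) :
    piecewiseIci h f hf hfh y = if h ≤ y then f y else y := rfl

lemma piecewiseIic_mem_infiniteRange (hr : (Ioi h).Infinite) {hf hfh} :
    piecewiseIic h f hf hfh ∈ infiniteRange X :=
  hr.mono fun y hy => ⟨y, if_neg (not_le.mpr hy)⟩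

lemma piecewiseIci_mem_infiniteRange (hl : (Iio h).Infinite) {hf hfh} :
    piecewiseIci h f hf hfh ∈ infiniteRange X :=
  hl.mono fun y hy => ⟨y, if_neg (not_le.mpr hy)⟩

end Piecewise

section Factorization

variable {h : X} (α : X →o X) (hαh : α h ≤ h)

/-- The partial product of the factorization of `α` in which the values `c < b` that `α` takes
above `h` have already been brought down. -/
def resolveBelow (b : X) (hb : b ≤ h) : X →o X where
  toFun x := if x ≤ h ∨ α x < b then α x else x
  monotone' x y hxy := by
    dsimp only
    split_ifs with hx hy hy
    · exact α.mono hxy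
    · push Not at hy
      rcases hx with hx | hx
      · exact ((α.mono hx).trans hαh).trans hy.1.le
      · exact (hx.trans_le hb).le.trans hy.1.le
    · push Not at hx
      rcases hy with hy | hy
      · exact absurd (hxy.trans hy) hx.1.not_ge
      · exact absurd (α.mono hxy) (hy.trans_le hx.2).not_ge
    · exact hxy

@[simp]
lemma resolveBelow_apply {b hb} (x : X) :
    resolveBelow α hαh b hb x = if x ≤ h ∨ α x < b then α x else x := rfl

lemma monotoneOn_collapse (a : X) : MonotoneOn (fun y => if α y ≤ a then h else y) (Ici h) := by
  intro x _ y hy hxy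
  dsimp only
  split_ifs with hxa hya hya
  · rfl
  · exact hy
  · exact absurd ((α.mono hxy).trans hya) hxa
  · exact hxy

variable (h) in
def crossOnce (a : X) : X →o X :=
  piecewiseIic h (min · a) (Monotone.monotoneOn (fun _ _ hxy => min_le_min_right a hxy) _)
      (min_le_left h a) *
    piecewiseIci h (fun y => if α y ≤ a then h else y) (monotoneOn_collapse α a)
      (by split_ifs <;> rfl)

variable {α hαh}

lemma crossOnce_apply {a : X} (ha : α h ≤ a) (hah : a < h) (x : X) :
    crossOnce h α a x = if x ≤ h ∨ α x ≤ a then min x a else x := by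
  simp only [crossOnce, mul_apply_eq_comp, piecewiseIic_apply, piecewiseIci_apply, min_def]
  have hαx : x ≤ h → α x ≤ a := fun hx => (α.mono hx).trans ha
  split_ifs <;> grind

lemma resolveBelow_eq_piecewiseIic {b : X} (hb : b ≤ h) (hnone : α '' Ioi h ∩ Iio b = ∅) :
    resolveBelow α hαh b hb = piecewiseIic h α (α.mono.monotoneOn _) hαh := by
  ext x
  rw [resolveBelow_apply, piecewiseIic_apply]
  have hcross : h < x → ¬ α x < b := fun hx hxb =>
    (eq_empty_iff_forall_notMem.mp hnone) _ ⟨⟨x, hx, rfl⟩, hxb⟩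
  split_ifs <;> grind

lemma resolveBelow_eq_crossOnce_mul {a b : X} (ha : a ∈ α '' Ioi h) (hab : a < b) (hb : b ≤ h)
    (hmax : ∀ c ∈ α '' Ioi h, c < b → c ≤ a) :
    resolveBelow α hαh b hb = crossOnce h α a * resolveBelow α hαh a (hab.le.trans hb) := by
  obtain ⟨y, hy, rfl⟩ := ha
  have hαy : α h ≤ α y := α.mono hy.le
  ext x
  rw [mul_apply_eq_comp, crossOnce_apply hαy (hab.trans_le hb), resolveBelow_apply,
    resolveBelow_apply, min_def]
  have hαx : x ≤ h → α x ≤ α y := fun hx => (α.mono hx).trans hαy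
  have hmax' : h < x → α x < b → α x ≤ α y := fun hx hxb => hmax _ ⟨x, hx, rfl⟩ hxb
  split_ifs <;> grind

lemma eq_piecewiseIci_mul_resolveBelow :
    α = piecewiseIci h (fun y => max (α y) h)
      (Monotone.monotoneOn (fun _ _ hxy => max_le_max_right h (α.mono hxy)) _) (le_max_right _ _) *
      resolveBelow α hαh h le_rfl := by
  ext x
  rw [mul_apply_eq_comp, piecewiseIci_apply, resolveBelow_apply]
  have hαx : x ≤ h → α x ≤ h := fun hx => (α.mono hx).trans hαh
  simp only [max_def]
  split_ifs <;> grind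

variable (hl : (Iio h).Infinite) (hr : (Ioi h).Infinite)
include hl hr

lemma crossOnce_mem_closure (a : X) : crossOnce h α a ∈ closure (infiniteRange X) :=
  mul_mem (subset_closure (piecewiseIic_mem_infiniteRange hr))
    (subset_closure (piecewiseIci_mem_infiniteRange hl))

lemma resolveBelow_mem_closure (hfin : (range α).Finite) (b : X) (hb : b ≤ h) :
    resolveBelow α hαh b hb ∈ closure (infiniteRange X) := by
  induction hn : (α '' Ioi h ∩ Iio b).ncard using Nat.strong_induction_on generalizing b with
  | _ n ih =>
  have hcross : (α '' Ioi h ∩ Iio b).Finite :=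
    hfin.subset (inter_subset_left.trans (image_subset_range _ _))
  rcases (α '' Ioi h ∩ Iio b).eq_empty_or_nonempty with hnone | hne
  · rw [resolveBelow_eq_piecewiseIic hb hnone]
    exact subset_closure (piecewiseIic_mem_infiniteRange hr)
  obtain ⟨a, ⟨ha, hab⟩, hmax⟩ := exists_max_image _ id hcross hne
  rw [resolveBelow_eq_crossOnce_mul ha hab hb fun c hc hcb => hmax c ⟨hc, hcb⟩]
  refine mul_mem (crossOnce_mem_closure hl hr a) (ih _ ?_ a _ rfl)
  rw [← hn]
  refine ncard_lt_ncard ⟨inter_subset_inter_right _ (Iio_subset_Iio hab.le), fun hsub => ?_⟩ hcross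
  exact (hsub ⟨ha, hab⟩).2.false

end Factorization

lemma mem_closure_of_map_le {h : X} (hl : (Iio h).Infinite) (hr : (Ioi h).Infinite)
    {α : X →o X} (hfin : (range α).Finite) (hαh : α h ≤ h) : α ∈ closure (infiniteRange X) := by
  rw [eq_piecewiseIci_mul_resolveBelow (hαh := hαh)]
  exact mul_mem (subset_closure (piecewiseIci_mem_infiniteRange hl))
    (resolveBelow_mem_closure hl hr hfin h le_rfl)

theorem closure_infiniteRange_eq_top {h : X} (hl : (Iic h).Infinite) (hr : (Ici h).Infinite) :
    closure (infiniteRange X) = ⊤ := by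
  replace hl : (Iio h).Infinite := Iic_sdiff_right (a := h) ▸ hl.sdiff (finite_singleton h)
  replace hr : (Ioi h).Infinite := Ici_sdiff_left (a := h) ▸ hr.sdiff (finite_singleton h)
  refine eq_top_iff.mpr fun α _ => ?_
  rcases (range α).finite_or_infinite with hfin | hinf
  · rcases le_total (α h) h with hαh | hαh
    · exact mem_closure_of_map_le hl hr hfin hαh
    · rw [← dual_mem_closure_iff]
      exact mem_closure_of_map_le (h := OrderDual.toDual h) hr hl hfin hαh
  · exact subset_closure hinf

section

lemma not_bddAbove_range_mul {f g : X →o X} (hf : ¬BddAbove (range f))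
    (hg : ¬BddAbove (range g)) : ¬BddAbove (range (f * g)) := by
  rintro ⟨m, hm⟩
  refine hf ⟨m, ?_⟩
  rintro _ ⟨x, rfl⟩
  obtain ⟨_, ⟨z, rfl⟩, hz⟩ := not_bddAbove_iff.mp hg x
  exact (f.mono hz.le).trans (hm ⟨z, rfl⟩)

lemma not_bddAbove_range_of_mem_closure [Infinite X] (hfin : ∀ x : X, (Iic x).Finite)
    {f : X →o X} (hf : f ∈ closure (infiniteRange X)) : ¬BddAbove (range f) := by
  have not_bddAbove {s : Set X} (hs : s.Infinite) : ¬BddAbove s :=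
    fun ⟨m, hm⟩ => hs ((hfin m).subset hm)
  induction hf using closure_induction with
  | mem f hf => exact not_bddAbove hf
  | one => exact not_bddAbove (by simpa using infinite_univ)
  | mul f g _ _ hf hg => exact not_bddAbove_range_mul hf hg

variable (hno : ∀ x : X, (Iic x).Finite ∨ (Ici x).Finite)
include hno

lemma Iic_apply_finite {f : X →o X} (hf : f ∈ infiniteRange X) {x : X} (hx : (Iic x).Finite) :
    (Iic (f x)).Finite := by
  refine (hno (f x)).resolve_right fun hfx => hf (((hx.image f).union hfx).subset ?_)
  rintro _ ⟨y, rfl⟩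
  rcases le_total y x with hy | hy
  exacts [Or.inl ⟨y, hy, rfl⟩, Or.inr (f.mono hy)]

lemma mapsTo_of_mem_closure {f : X →o X} (hf : f ∈ closure (infiniteRange X)) :
    MapsTo f {x | (Iic x).Finite} {x | (Iic x).Finite} := by
  induction hf using closure_induction with
  | mem f hf => exact fun x hx => Iic_apply_finite hno hf hx
  | one => exact mapsTo_id _
  | mul f g _ _ hf hg => exact hf.comp hg

end

def roundDown (F : Finset X) (hF : F.Nonempty) : X →o X where
  toFun y := (insert (F.min' hF) {z ∈ F | z ≤ y}).max' (Finset.insert_nonempty _ _)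
  monotone' _ _ hxy := Finset.max'_subset _ <| Finset.insert_subset_insert _ <|
    Finset.monotone_filter_right _ fun _ _ h => h.trans hxy

lemma roundDown_apply {F : Finset X} (hF : F.Nonempty) (y : X) :
    roundDown F hF y = (insert (F.min' hF) {z ∈ F | z ≤ y}).max' (Finset.insert_nonempty _ _) :=
  rfl

lemma range_roundDown (F : Finset X) (hF : F.Nonempty) : range (roundDown F hF) = F := by
  refine Subset.antisymm ?_ fun z hz => ⟨z, ?_⟩
  · rintro _ ⟨y, rfl⟩
    rcases Finset.mem_insert.mp (Finset.max'_mem _ (Finset.insert_nonempty (F.min' hF)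
      {z ∈ F | z ≤ y})) with h | h
    · rw [roundDown_apply, h]
      exact F.min'_mem hF
    · exact (Finset.mem_filter.mp h).1
  · rw [roundDown_apply]
    refine le_antisymm (Finset.max'_le _ _ _ fun w hw => ?_)
      (Finset.le_max' _ _ (by simp [Finset.mem_coe.mp hz]))
    rcases Finset.mem_insert.mp hw with rfl | hw
    exacts [F.min'_le z hz, (Finset.mem_filter.mp hw).2]

lemma encard_range_roundDown {F : Finset X} (hF : F.Nonempty) :
    (range (roundDown F hF)).encard = F.card := by
  rw [range_roundDown, encard_coe_eq_coe_finsetCard]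

section NotGenerated

lemma exists_notMem_closure_of_dual {N : ℕ}
    (h : ∃ α : Xᵒᵈ →o Xᵒᵈ, α ∉ closure (infiniteRange Xᵒᵈ) ∧ N < (range α).encard) :
    ∃ α : X →o X, α ∉ closure (infiniteRange X) ∧ N < (range α).encard := by
  obtain ⟨α, hα, hN⟩ := h
  exact ⟨OrderHom.dual.symm α, by rwa [← dual_mem_closure_iff, Equiv.apply_symm_apply], hN⟩

variable [Infinite X] (N : ℕ)

lemma exists_notMem_closure_of_forall_Iic_finite (hfin : ∀ x : X, (Iic x).Finite) :
    ∃ α : X →o X, α ∉ closure (infiniteRange X) ∧ N < (range α).encard := by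
  obtain ⟨F, hF⟩ := Infinite.exists_subset_card_eq X (N + 1)
  have hne : F.Nonempty := Finset.card_pos.mp (by omega)
  refine ⟨roundDown F hne, fun hα => not_bddAbove_range_of_mem_closure hfin hα ?_, ?_⟩
  · rw [range_roundDown]
    exact F.finite_toSet.bddAbove
  · rw [encard_range_roundDown, hF]
    exact_mod_cast N.lt_succ_self

variable (hno : ∀ x : X, (Iic x).Finite ∨ (Ici x).Finite)
include hno

lemma exists_notMem_closure_of_upper_infinite (hU : {x : X | (Ici x).Finite}.Infinite) :
    ∃ α : X →o X, α ∉ closure (infiniteRange X) ∧ N < (range α).encard := by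
  by_cases hL : ∃ v : X, (Iic v).Finite
  · obtain ⟨v, hv⟩ := hL
    obtain ⟨F, hFU, hF⟩ := hU.exists_subset_card_eq (N + 1)
    have hne : F.Nonempty := Finset.card_pos.mp (by omega)
    refine ⟨roundDown F hne, fun hα => ?_, ?_⟩
    · have hIci : (Ici (roundDown F hne v)).Finite := hFU (range_roundDown F hne ▸ ⟨v, rfl⟩)
      have hIic : (Iic (roundDown F hne v)).Finite := mapsTo_of_mem_closure hno hα hv
      exact infinite_univ (Iic_union_Ici (a := roundDown F hne v) ▸ hIic.union hIci)
    · rw [encard_range_roundDown, hF]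
      exact_mod_cast N.lt_succ_self
  · push Not at hL
    have : Infinite Xᵒᵈ := ‹Infinite X›
    exact exists_notMem_closure_of_dual <| exists_notMem_closure_of_forall_Iic_finite (X := Xᵒᵈ) N
      fun x => (hno x).resolve_left (hL x)

theorem exists_notMem_closure :
    ∃ α : X →o X, α ∉ closure (infiniteRange X) ∧ N < (range α).encard := by
  rcases {x : X | (Ici x).Finite}.finite_or_infinite with hU | hU
  · have hL : {x : X | (Iic x).Finite}.Infinite :=
      infinite_of_finite_compl (hU.subset fun x hx => (hno x).resolve_left hx)
    have : Infinite Xᵒᵈ := ‹Infinite X›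
    exact exists_notMem_closure_of_dual <|
      exists_notMem_closure_of_upper_infinite (X := Xᵒᵈ) N (fun x => (hno x).symm) hL
  · exact exists_notMem_closure_of_upper_infinite N hno hU

end NotGenerated

lemma encard_range_mul_le_left (f g : X →o X) : (range (f * g)).encard ≤ (range f).encard :=
  encard_le_encard (by rw [FunLike.coe_mul_eq_comp]; exact range_comp_subset_range _ _)

lemma encard_range_mul_le_right (f g : X →o X) : (range (f * g)).encard ≤ (range g).encard := by
  rw [FunLike.coe_mul_eq_comp, range_comp]
  exact encard_image_le _ _

end OrderHom

theorem Submonoid.mem_closure_union_of_absorbing {M : Type*} [Monoid M] {S K : Set M}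
    (hK : ∀ x ∈ K, ∀ y, x * y ∈ K ∧ y * x ∈ K) {x : M} (hx : x ∈ closure (S ∪ K)) :
    x ∈ closure S ∨ x ∈ K := by
  induction hx using closure_induction with
  | mem x hx => exact hx.imp (fun h => subset_closure h) id
  | one => exact Or.inl (one_mem _)
  | mul x y _ _ hx hy =>
    rcases hx with hx | hx
    · rcases hy with hy | hy
      · exact Or.inl (mul_mem hx hy)
      · exact Or.inr (hK y hy x).2
    · exact Or.inr (hK x hx y).1

lemma Set.Finite.exists_encard_range_le {α β : Type*} {B : Set (α → β)} (hB : B.Finite) :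
    ∃ N : ℕ, ∀ f ∈ B, (range f).Finite → (range f).encard ≤ N := by
  obtain ⟨N, hN⟩ := (hB.image fun f => (range f).ncard).bddAbove
  exact ⟨N, fun f hf hfin => hfin.cast_ncard_eq ▸ Nat.cast_le.mpr (hN ⟨f, hf, rfl⟩)⟩

section

variable {X : Type*} [LinearOrder X]

lemma OrderHom.coe_list_prod_eq_foldr (l : List (X →o X)) :
    ⇑l.prod = (l.map (⇑)).foldr (· ∘ ·) _root_.id := by
  induction l with
  | nil => rfl
  | cons f l ih => rw [List.prod_cons, FunLike.coe_mul_eq_comp, ih]; rfl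

lemma exists_foldr_eq_of_mem_closure [Infinite X] {f : X →o X}
    (hf : f ∈ closure (OrderHom.infiniteRange X)) :
    ∃ l : List (X → X), l ≠ [] ∧ (∀ g ∈ l, Monotone g ∧ (range g).Infinite) ∧
      ⇑f = l.foldr (· ∘ ·) id := by
  obtain ⟨l, hl, rfl⟩ := exists_list_of_mem_closure hf
  refine ⟨id :: l.map (⇑), List.cons_ne_nil _ _, ?_, by rw [OrderHom.coe_list_prod_eq_foldr]; rfl⟩
  simp only [List.mem_cons, List.mem_map]
  rintro _ (rfl | ⟨g, hg, rfl⟩)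
  exacts [⟨monotone_id, by simpa using infinite_univ⟩, ⟨g.mono, hl g hg⟩]

lemma mem_closure_of_coe_eq_foldr {S : Set (X →o X)} {l : List (X → X)}
    (hl : ∀ g ∈ l, ∃ g' ∈ S, ⇑g' = g) {f : X →o X} (hf : ⇑f = l.foldr (· ∘ ·) id) :
    f ∈ closure S := by
  suffices ∃ f' ∈ closure S, ⇑f' = l.foldr (· ∘ ·) id by
    obtain ⟨f', hf', hff'⟩ := this
    rwa [DFunLike.coe_injective (hff'.trans hf.symm)] at hf'
  clear hf
  induction l with
  | nil => exact ⟨1, one_mem _, rfl⟩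
  | cons g l ih =>
    obtain ⟨g', hg', rfl⟩ := hl g List.mem_cons_self
    obtain ⟨f', hf', hff'⟩ := ih fun g hg => hl g (List.mem_cons_of_mem _ hg)
    exact ⟨g' * f', mul_mem (subset_closure hg') hf', by rw [FunLike.coe_mul_eq_comp, hff']; rfl⟩

theorem exists_infinite_sides_of_generates [Infinite X] {B : Set (X → X)} (hB : B.Finite)
    (hBm : ∀ f ∈ B, Monotone f)
    (hgen : ∀ α : X → X, Monotone α → ∃ l : List (X → X), l ≠ [] ∧
      (∀ f ∈ l, f ∈ {f | Monotone f ∧ (range f).Infinite} ∪ B) ∧ α = l.foldr (· ∘ ·) id) :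
    ∃ x : X, (Iic x).Infinite ∧ (Ici x).Infinite := by
  by_contra hsides
  have hno : ∀ x : X, (Iic x).Finite ∨ (Ici x).Finite := by
    simpa only [not_exists, not_and_or, not_infinite] using hsides
  obtain ⟨N, hN⟩ := hB.exists_encard_range_le
  obtain ⟨α, hα, hαN⟩ := OrderHom.exists_notMem_closure N hno
  obtain ⟨l, -, hl, hαl⟩ := hgen α α.monotone
  have hmem : α ∈ closure (OrderHom.infiniteRange X ∪ {f | (range f).encard ≤ N}) := by
    refine mem_closure_of_coe_eq_foldr (fun g hg => ?_) hαl
    rcases hl g hg with ⟨hgm, hginf⟩ | hgB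
    · exact ⟨⟨g, hgm⟩, Or.inl hginf, rfl⟩
    · rcases (range g).finite_or_infinite with hfin | hinf
      exacts [⟨⟨g, hBm g hgB⟩, Or.inr (hN g hgB hfin), rfl⟩, ⟨⟨g, hBm g hgB⟩, Or.inl hinf, rfl⟩]
  have hsmall (f : X →o X) (hf : (range f).encard ≤ N) (g : X →o X) :
      (range (f * g)).encard ≤ N ∧ (range (g * f)).encard ≤ N :=
    ⟨(OrderHom.encard_range_mul_le_left f g).trans hf,
      (OrderHom.encard_range_mul_le_right g f).trans hf⟩
  rcases mem_closure_union_of_absorbing hsmall hmem with h | h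
  exacts [hα h, not_le.mpr hαN h]

end

theorem stmt_16_general {X : Type*} [LinearOrder X] [Infinite X] :
    let J : Set (X → X) := {f | Monotone f ∧ (Set.range f).Infinite}
    let gen : Set (X → X) → Prop := fun B =>
      ∀ α : X → X, Monotone α → ∃ l : List (X → X), l ≠ [] ∧
        (∀ f ∈ l, f ∈ J ∪ B) ∧ α = l.foldr (· ∘ ·) id
    ((gen ∅ ↔ ∃ B : Set (X → X), B.Finite ∧ (∀ f ∈ B, Monotone f) ∧ gen B) ∧
     ((∃ B : Set (X → X), B.Finite ∧ (∀ f ∈ B, Monotone f) ∧ gen B) ↔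
       ∃ x : X, (Set.Iic x).Infinite ∧ (Set.Ici x).Infinite)) := by
  intro J gen
  have gen_empty_of_infinite_sides : (∃ x : X, (Iic x).Infinite ∧ (Ici x).Infinite) → gen ∅ := by
    rintro ⟨x, hl, hr⟩ α hα
    obtain ⟨l, hne, hl, hαl⟩ := exists_foldr_eq_of_mem_closure
      ((OrderHom.closure_infiniteRange_eq_top hl hr).symm ▸ mem_top (⟨α, hα⟩ : X →o X))
    exact ⟨l, hne, fun f hf => Or.inl (hl f hf), hαl⟩
  have infinite_sides_of_gen : (∃ B : Set (X → X), B.Finite ∧ (∀ f ∈ B, Monotone f) ∧ gen B) →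
      ∃ x : X, (Iic x).Infinite ∧ (Ici x).Infinite :=
    fun ⟨_, hB, hBm, hgen⟩ => exists_infinite_sides_of_generates hB hBm hgen
  have gen_empty : gen ∅ → ∃ B : Set (X → X), B.Finite ∧ (∀ f ∈ B, Monotone f) ∧ gen B :=
    fun h => ⟨∅, finite_empty, fun _ h => h.elim, h⟩
  exact ⟨⟨gen_empty, gen_empty_of_infinite_sides ∘ infinite_sides_of_gen⟩, infinite_sides_of_gen,
    gen_empty ∘ gen_empty_of_infinite_sides⟩

theorem stmt_16 {X : Type*} [LinearOrder X] [Countable X] [Infinite X] :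
    let J : Set (X → X) := {f | Monotone f ∧ (Set.range f).Infinite}
    let gen : Set (X → X) → Prop := fun B =>
      ∀ α : X → X, Monotone α → ∃ l : List (X → X), l ≠ [] ∧
        (∀ f ∈ l, f ∈ J ∪ B) ∧ α = l.foldr (· ∘ ·) id
    ((gen ∅ ↔ ∃ B : Set (X → X), B.Finite ∧ (∀ f ∈ B, Monotone f) ∧ gen B) ∧
     ((∃ B : Set (X → X), B.Finite ∧ (∀ f ∈ B, Monotone f) ∧ gen B) ↔
       ∃ x : X, (Set.Iic x).Infinite ∧ (Set.Ici x).Infinite)) :=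
  stmt_16_general
end

section
/- For X = ℕ with the usual order, the relative rank of O(ℕ) modulo J = {α ∈ O(ℕ) : Im(α) is infinite} equals ℵ₀. In particular, the set of order-preserving self-maps of ℕ with finite image is countably infinite. -/
/-!
A product of monotone self-maps of `ℕ` with infinite images tends to infinity, so a product with
finite image has a factor with finite image, and its image is no larger than that factor's.
Hence finitely many generators outside `J` only produce finite images of bounded size, while
`n ↦ min n N` has an image with `N + 1` points. Conversely the monotone maps with finite image
generate modulo `J` on their own, and they form a countably infinite set, since each of them is
eventually constant.
-/

open Set Filter

theorem tendsto_foldr_comp {α : Type*} {F : Filter α} {l : List (α → α)}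
    (hl : ∀ f ∈ l, Tendsto f F F) : Tendsto (l.foldr (· ∘ ·) id) F F := by
  induction l with
  | nil => exact tendsto_id
  | cons g l ih =>
    exact (hl g List.mem_cons_self).comp (ih fun f hf => hl f (List.mem_cons_of_mem g hf))

theorem encard_range_foldr_comp_le {α : Type*} {l : List (α → α)} {f : α → α} (hf : f ∈ l) :
    (range (l.foldr (· ∘ ·) id)).encard ≤ (range f).encard := by
  induction l with
  | nil => simp at hf
  | cons g l ih =>
    rw [List.foldr_cons]
    rcases List.mem_cons.mp hf with rfl | hf
    · exact encard_le_encard (range_comp_subset_range _ _)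
    · rw [range_comp]
      exact (encard_image_le g _).trans (ih hf)

theorem exists_mem_range_finite_encard_le {l : List (ℕ → ℕ)} (hl : ∀ f ∈ l, Monotone f)
    (hfin : (range (l.foldr (· ∘ ·) id)).Finite) :
    ∃ f ∈ l, (range f).Finite ∧ (range (l.foldr (· ∘ ·) id)).encard ≤ (range f).encard := by
  by_contra! h
  have htendsto : Tendsto (l.foldr (· ∘ ·) id) atTop atTop := by
    refine tendsto_foldr_comp fun f hf => tendsto_atTop_atTop_of_monotone' (hl f hf) ?_
    have hinf : (range f).Infinite := fun hf' => (h f hf hf').not_ge (encard_range_foldr_comp_le hf)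
    exact hinf.not_bddAbove
  exact not_bddAbove_of_tendsto_atTop htendsto hfin.bddAbove

theorem encard_range_min (N : ℕ) : (range fun n => min n N).encard = N + 1 := by
  have : (range fun n => min n N) = Iic N :=
    Subset.antisymm (range_subset_iff.mpr fun n => min_le_right n N)
      fun k hk => ⟨k, min_eq_left hk⟩
  rw [this, ← Finset.coe_Iic, encard_coe_eq_coe_finsetCard, Nat.card_Iic]
  rfl

theorem Monotone.eq_comp_min_of_finite_range {f : ℕ → ℕ} (hf : Monotone f)
    (hfin : (range f).Finite) : ∃ a, f = fun k => f (min k a) := by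
  obtain ⟨a, ha⟩ : sSup (range f) ∈ range f := Nat.sSup_mem (range_nonempty f) hfin.bddAbove
  refine ⟨a, funext fun k => ?_⟩
  rcases le_total k a with hk | hk
  · rw [min_eq_left hk]
  · rw [min_eq_right hk]
    exact le_antisymm (ha ▸ le_csSup hfin.bddAbove ⟨k, rfl⟩) (hf hk)

theorem countable_setOf_monotone_range_finite :
    {f : ℕ → ℕ | Monotone f ∧ (range f).Finite}.Countable := by
  refine (countable_iUnion fun a : ℕ =>
    countable_range fun g : Fin (a + 1) → ℕ => fun k => g ⟨min k a, by omega⟩).mono ?_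
  rintro f ⟨hf, hfin⟩
  obtain ⟨a, ha⟩ := hf.eq_comp_min_of_finite_range hfin
  exact mem_iUnion.mpr ⟨a, fun i => f i, ha.symm⟩

theorem infinite_setOf_monotone_range_finite :
    {f : ℕ → ℕ | Monotone f ∧ (range f).Finite}.Infinite :=
  infinite_of_injective_forall_mem (f := fun c : ℕ => fun _ : ℕ => c)
    (fun _ _ h => congrFun h 0) fun _ => ⟨monotone_const, finite_range_const⟩

theorem infinite_of_forall_monotone_eq_foldr {B : Set (ℕ → ℕ)} (hB : ∀ f ∈ B, Monotone f)
    (hgen : ∀ α : ℕ → ℕ, Monotone α → ∃ l : List (ℕ → ℕ),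
      (∀ f ∈ l, f ∈ {f | Monotone f ∧ (range f).Infinite} ∪ B) ∧ α = l.foldr (· ∘ ·) id) :
    B.Infinite := by
  intro hBfin
  set N := hBfin.toFinset.sup fun f => (range f).ncard
  have hN : ∀ f ∈ B, (range f).Finite → (range f).encard ≤ N := fun f hf hfin => by
    rw [← hfin.cast_ncard_eq, Nat.cast_le]
    exact Finset.le_sup (f := fun f => (range f).ncard) (hBfin.mem_toFinset.mpr hf)
  obtain ⟨l, hl, hmin⟩ := hgen (fun n => min n N) (monotone_id.min monotone_const)
  have hl_mono : ∀ f ∈ l, Monotone f := fun f hf => (hl f hf).elim (·.1) (hB f)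
  have hmin_fin : (range (l.foldr (· ∘ ·) id)).Finite := by
    rw [← hmin]
    exact finite_of_encard_eq_coe (encard_range_min N)
  obtain ⟨f, hfl, hffin, hle⟩ := exists_mem_range_finite_encard_le hl_mono hmin_fin
  have hfB : f ∈ B := (hl f hfl).resolve_left fun hJ => hJ.2 hffin
  have hcard := hle.trans (hN f hfB hffin)
  rw [← hmin, encard_range_min] at hcard
  norm_cast at hcard
  omega

theorem stmt_17 :
    let J : Set (ℕ → ℕ) := {f | Monotone f ∧ (Set.range f).Infinite}
    let gen : Set (ℕ → ℕ) → Prop := fun B =>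
      ∀ α : ℕ → ℕ, Monotone α → ∃ l : List (ℕ → ℕ), l ≠ [] ∧
        (∀ f ∈ l, f ∈ J ∪ B) ∧ α = l.foldr (· ∘ ·) id
    ((∃ B : Set (ℕ → ℕ), (∀ f ∈ B, Monotone f) ∧ gen B ∧
        Cardinal.mk ↥B = Cardinal.aleph0) ∧
     (∀ B : Set (ℕ → ℕ), (∀ f ∈ B, Monotone f) → gen B →
        Cardinal.aleph0 ≤ Cardinal.mk ↥B) ∧
     {f : ℕ → ℕ | Monotone f ∧ (Set.range f).Finite}.Countable ∧
     {f : ℕ → ℕ | Monotone f ∧ (Set.range f).Finite}.Infinite) := by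
  intro J gen
  have hcount := countable_setOf_monotone_range_finite
  have hinf := infinite_setOf_monotone_range_finite
  have hgen : gen {f | Monotone f ∧ (range f).Finite} := fun α hα => by
    refine ⟨[α], List.cons_ne_nil α [], ?_, rfl⟩
    simp only [List.mem_singleton, forall_eq]
    exact (em (range α).Finite).symm.imp (⟨hα, ·⟩) (⟨hα, ·⟩)
  refine ⟨⟨_, fun f hf => hf.1, hgen, ?_⟩, fun B hB hgen => ?_, hcount, hinf⟩
  · have := hcount.to_subtype
    have := hinf.to_subtype
    exact Cardinal.mk_eq_aleph0 _
  · refine Cardinal.aleph0_le_mk_iff.mpr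
      (infinite_of_forall_monotone_eq_foldr hB fun α hα => ?_).to_subtype
    obtain ⟨l, -, hl, rfl⟩ := hgen α hα
    exact ⟨l, hl, rfl⟩
end

section
/- Let X be an infinite chain such that X \ X^0 is finite. Then every order-preserving self-map of X is a composition of finitely many order-preserving self-maps whose images have cardinality |X|; that is, O(X) = ⟨J⟩. -/
/-!
Every monotone `α` equals `max(α, id) ∘ min(α, id)`, and order duality exchanges the two
factors, so it suffices to factor a monotone `δ ≤ id`. If `δ` sends some point `b` with `|X|`
points above it to a point with `|X|` points below it, then `δ` splits at `b` into two maps of `J`.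
Otherwise `δ` sends everything outside a finite final segment `D` into the finite initial segment
`smallBelow X`. After one factor of `J` we may assume `δ = id` on `D`; let `c` be the largest
value of `δ` off `D`. If `c` is attained on `X⁰` at `u`, then `δ` factors through `min(·, u)`.
Otherwise the fibre of `c` lies in the finite set `smallAbove X`; lifting the value `c` to a point
`m ∈ X⁰` costs one factor of `J` and adds that fibre to `D`, which can only happen finitely often.
-/

open Cardinal Set

namespace OrderPreservingMaps

theorem mk_sdiff_of_finite {α : Type*} [Infinite α] {s t : Set α} (hs : #s = #α)
    (ht : t.Finite) : #↥(s \ t) = #α := by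
  refine (mk_set_le _).antisymm (not_lt.1 fun hlt => ?_)
  have hsum := add_lt_of_lt (aleph0_le_mk α) hlt (ht.lt_aleph0.trans_le (aleph0_le_mk α))
  exact ((le_mk_sdiff_add_mk s t).trans_lt hsum).ne hs

theorem foldr_comp_append {α : Type*} (l₁ l₂ : List (α → α)) :
    (l₁ ++ l₂).foldr (· ∘ ·) id = l₁.foldr (· ∘ ·) id ∘ l₂.foldr (· ∘ ·) id := by
  induction l₁ with
  | nil => rfl
  | cons f l ih => simp [ih, Function.comp_assoc]

theorem exists_notMem_forall_le_image {α β : Type*} [LinearOrder β] [Infinite β] {s : Set β}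
    (hs : s.Finite) {D : Set α} (hD : D.Finite) {φ : α → β} (hφ : ∀ d ∈ D, φ d ∉ s) :
    ∃ v ∉ s, ∀ d ∈ D, v ≤ φ d := by
  rcases D.eq_empty_or_nonempty with rfl | hne
  · obtain ⟨v, hv⟩ := hs.exists_notMem
    exact ⟨v, hv, fun d hd => absurd hd (notMem_empty d)⟩
  · obtain ⟨d₀, hd₀, hmin⟩ := exists_min_image D φ hD hne
    exact ⟨φ d₀, hφ d₀ hd₀, hmin⟩

theorem _root_.Monotone.max_id_comp_min_id {α : Type*} [LinearOrder α] {f : α → α}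
    (hf : Monotone f) : (fun x => max (f x) x) ∘ (fun x => min (f x) x) = f := by
  funext x
  rcases le_total (f x) x with h | h
  · simp [h, hf h]
  · simp [h]

variable {X : Type*} [LinearOrder X]

/-- `smallBelow X ∪ smallAbove X` is the paper's `X \ X⁰`. -/
def smallBelow (X : Type*) [LinearOrder X] : Set X := {x | #(Iic x) < #X}

def smallAbove (X : Type*) [LinearOrder X] : Set X := {x | #(Ici x) < #X}

def IsJ (f : X → X) : Prop := Monotone f ∧ #(range f) = #X

/-- Membership in the subsemigroup `⟨J⟩` generated by `J`. -/
inductive IsJProduct : (X → X) → Prop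
  | of_isJ {f : X → X} : IsJ f → IsJProduct f
  | comp {f g : X → X} : IsJProduct f → IsJProduct g → IsJProduct (f ∘ g)

section SmallParts

theorem mk_Iic_eq {x : X} (hx : x ∉ smallBelow X) : #(Iic x) = #X :=
  (mk_set_le _).eq_of_not_lt hx

theorem mk_Ici_eq {x : X} (hx : x ∉ smallAbove X) : #(Ici x) = #X :=
  (mk_set_le _).eq_of_not_lt hx

theorem isLowerSet_smallBelow : IsLowerSet (smallBelow X) :=
  fun _ _ hba ha => (mk_le_mk_of_subset (Iic_subset_Iic.2 hba)).trans_lt ha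

theorem isUpperSet_smallAbove : IsUpperSet (smallAbove X) :=
  fun _ _ hab ha => (mk_le_mk_of_subset (Ici_subset_Ici.2 hab)).trans_lt ha

theorem lt_of_mem_smallBelow {x y : X} (hx : x ∈ smallBelow X) (hy : y ∉ smallBelow X) :
    x < y :=
  lt_of_not_ge fun h => hy (isLowerSet_smallBelow h hx)

theorem lt_of_mem_smallAbove {x y : X} (hx : x ∈ smallAbove X) (hy : y ∉ smallAbove X) :
    y < x :=
  lt_of_not_ge fun h => hy (isUpperSet_smallAbove h hx)

variable [Infinite X]

theorem mk_Iio_eq {x : X} (hx : x ∉ smallBelow X) : #(Iio x) = #X := by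
  rw [← Iic_sdiff_right]
  exact mk_sdiff_of_finite (mk_Iic_eq hx) (finite_singleton x)

theorem mk_Ioi_eq {x : X} (hx : x ∉ smallAbove X) : #(Ioi x) = #X := by
  rw [← Ici_sdiff_left]
  exact mk_sdiff_of_finite (mk_Ici_eq hx) (finite_singleton x)

theorem disjoint_smallBelow_smallAbove : Disjoint (smallBelow X) (smallAbove X) := by
  refine disjoint_left.2 fun x (hB : #(Iic x) < #X) (hA : #(Ici x) < #X) => ?_
  have hcover : #X ≤ #(Iic x) + #(Ici x) := by
    rw [← mk_univ, ← Iic_union_Ici]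
    exact mk_union_le _ _
  exact (hcover.trans_lt (add_lt_of_lt (aleph0_le_mk X) hB hA)).false

theorem notMem_smallBelow_of_mem_smallAbove {x : X} (hx : x ∈ smallAbove X) :
    x ∉ smallBelow X :=
  disjoint_right.1 disjoint_smallBelow_smallAbove hx

theorem exists_ge_notMem_smallBelow_notMem_smallAbove (hB : (smallBelow X).Finite)
    (hA : (smallAbove X).Finite) {x : X} (hx : x ∉ smallAbove X) :
    ∃ u, x ≤ u ∧ u ∉ smallBelow X ∧ u ∉ smallAbove X := by
  have hinf : (Ici x).Infinite :=
    infinite_coe_iff.1 (infinite_iff.2 ((mk_Ici_eq hx).symm ▸ aleph0_le_mk X))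
  obtain ⟨u, hxu, hu⟩ := (hinf.sdiff (hB.union hA)).nonempty
  exact ⟨u, hxu, not_or.1 hu⟩

end SmallParts

section Products

theorem IsJ.of_subset_range {f : X → X} (hf : Monotone f) {s : Set X} (hs : s ⊆ range f)
    (hsX : #s = #X) : IsJ f :=
  ⟨hf, (mk_set_le _).antisymm (hsX ▸ mk_le_mk_of_subset hs)⟩

theorem IsJProduct.exists_list {f : X → X} (h : IsJProduct f) :
    ∃ l : List (X → X), l ≠ [] ∧ (∀ g ∈ l, IsJ g) ∧ f = l.foldr (· ∘ ·) id := by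
  induction h with
  | of_isJ hf => exact ⟨[_], List.cons_ne_nil _ _, by simpa using hf, rfl⟩
  | comp _ _ ihf ihg =>
    obtain ⟨l₁, hl₁, hJ₁, rfl⟩ := ihf
    obtain ⟨l₂, -, hJ₂, rfl⟩ := ihg
    refine ⟨l₁ ++ l₂, by simp [hl₁], fun g hg => ?_, (foldr_comp_append l₁ l₂).symm⟩
    exact (List.mem_append.1 hg).elim (hJ₁ g) (hJ₂ g)

theorem IsJProduct.ofDual {f : Xᵒᵈ → Xᵒᵈ} (h : IsJProduct f) :
    IsJProduct (OrderDual.ofDual ∘ f ∘ OrderDual.toDual) := by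
  induction h with
  | of_isJ hf => exact .of_isJ ⟨hf.1.dual, hf.2⟩
  | comp _ _ ihf ihg => exact ihf.comp ihg

end Products

section Decomposition

theorem isJProduct_of_le_id_of_apply_notMem [Infinite X] {δ : X → X} (hδ : Monotone δ)
    (hle : ∀ x, δ x ≤ x) {b : X} (hb : b ∉ smallAbove X) (hδb : δ b ∉ smallBelow X) :
    IsJProduct δ := by
  set γ : X → X := fun x => if x < b then δ x else x
  set β : X → X := fun z => if z < b then min z (δ b) else δ z
  have hγ : IsJ γ := by
    refine .of_subset_range (fun x y hxy => ?_) (fun z (hz : b ≤ z) => ⟨z, if_neg hz.not_gt⟩)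
      (mk_Ici_eq hb)
    simp only [γ]
    split_ifs with hx hy hy
    · exact hδ hxy
    · exact (hle x).trans hxy
    · exact absurd (hxy.trans_lt hy) hx
    · exact hxy
  have hβ : IsJ β := by
    refine .of_subset_range (fun x y hxy => ?_) (fun z (hz : z < δ b) => ⟨z, ?_⟩)
      (mk_Iio_eq hδb)
    · simp only [β]
      split_ifs with hx hy hy
      · exact min_le_min_right _ hxy
      · exact (min_le_right _ _).trans (hδ (not_lt.1 hy))
      · exact absurd (hxy.trans_lt hy) hx
      · exact hδ hxy
    · simp [β, hz.trans_le (hle b), hz.le]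
  have hcomp : β ∘ γ = δ := by
    funext x
    by_cases hx : x < b
    · simp [γ, β, hx, (hle x).trans_lt hx, hδ hx.le]
    · simp [γ, β, hx]
  exact hcomp ▸ (IsJProduct.of_isJ hβ).comp (.of_isJ hγ)

theorem IsJProduct.of_update_id_comp [Infinite X] {φ : X → X} {c m : X} (hcm : c ≤ m)
    (hm : m ∉ smallAbove X) (hgap : ∀ x, φ x ≤ m → φ x ≤ c)
    (h : IsJProduct (Function.update id c m ∘ φ)) : IsJProduct φ := by
  set τ : X → X := fun z => if m < z then z else min z c
  have hτ : IsJ τ := by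
    refine .of_subset_range (fun x y hxy => ?_) (fun z (hz : m < z) => ⟨z, if_pos hz⟩)
      (mk_Ioi_eq hm)
    simp only [τ]
    split_ifs with hx hy hy
    · exact hxy
    · exact absurd (hx.trans_le hxy) hy
    · exact (min_le_left _ _).trans hxy
    · exact min_le_min_right _ hxy
  have hcomp : τ ∘ (Function.update id c m ∘ φ) = φ := by
    funext x
    by_cases hx : φ x = c
    · simp [τ, hx, hcm]
    · by_cases hmx : m < φ x
      · simp [τ, hx, hmx]
      · simp [τ, hx, hmx, hgap x (not_lt.1 hmx)]
  exact hcomp ▸ (IsJProduct.of_isJ hτ).comp h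

theorem _root_.Monotone.update_id_comp {φ : X → X} (hφ : Monotone φ) {c m : X} (hcm : c ≤ m)
    (hgap : ∀ x, φ x ≤ m → φ x ≤ c) : Monotone (Function.update id c m ∘ φ) := by
  intro x y hxy
  simp only [Function.comp_apply, Function.update_apply, id]
  split_ifs with hx hy hy
  · exact le_rfl
  · exact le_of_not_ge fun hym => hy (le_antisymm (hgap y hym) (hx ▸ hφ hxy))
  · exact (hy ▸ hφ hxy).trans hcm
  · exact hφ hxy

structure IsLowOff (D : Set X) (φ : X → X) : Prop where
  subset : D ⊆ smallAbove X
  upper : IsUpperSet D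
  mono : Monotone φ
  mem_of_notMem : ∀ x ∉ D, φ x ∈ smallBelow X
  notMem_of_mem : ∀ d ∈ D, φ d ∉ smallBelow X

namespace IsLowOff

variable {D : Set X} {φ : X → X}

theorem lt_of_notMem_of_mem [Infinite X] (h : IsLowOff D φ) {x d : X} (hx : x ∉ D) (hd : d ∈ D) :
    φ x < d :=
  lt_of_mem_smallBelow (h.mem_of_notMem x hx) (notMem_smallBelow_of_mem_smallAbove (h.subset hd))

theorem piecewise_id [Infinite X] [DecidablePred (· ∈ D)] (h : IsLowOff D φ) :
    IsLowOff D (D.piecewise id φ) where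
  subset := h.subset
  upper := h.upper
  mono x y hxy := by
    by_cases hx : x ∈ D
    · simp [hx, h.upper hxy hx, hxy]
    · by_cases hy : y ∈ D
      · simpa [hx, hy] using (h.lt_of_notMem_of_mem hx hy).le
      · simpa [hx, hy] using h.mono hxy
  mem_of_notMem x hx := by simpa [hx] using h.mem_of_notMem x hx
  notMem_of_mem d hd := by simpa [hd] using notMem_smallBelow_of_mem_smallAbove (h.subset hd)

theorem isJProduct_of_piecewise_id [Infinite X] [DecidablePred (· ∈ D)] (h : IsLowOff D φ)
    (hA : (smallAbove X).Finite) {v : X} (hv : v ∉ smallBelow X) (hvD : ∀ d ∈ D, v ≤ φ d)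
    (hψ : IsJProduct (D.piecewise id φ)) : IsJProduct φ := by
  set top : X → X := D.piecewise φ (fun z => min z v)
  have htop : IsJ top := by
    refine .of_subset_range (s := Iio v \ D) (fun x y hxy => ?_) (fun z hz => ⟨z, ?_⟩)
      (mk_sdiff_of_finite (mk_Iio_eq hv) (hA.subset h.subset))
    · by_cases hx : x ∈ D
      · simpa [top, hx, h.upper hxy hx] using h.mono hxy
      · by_cases hy : y ∈ D
        · simpa [top, hx, hy] using (min_le_right _ _).trans (hvD y hy)
        · simpa [top, hx, hy] using min_le_min_right _ hxy
    · simp [top, hz.2, hz.1.le]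
  have hcomp : top ∘ D.piecewise id φ = φ := by
    funext x
    by_cases hx : x ∈ D
    · simp [top, hx]
    · have hφx : φ x ∉ D := fun hD =>
        notMem_smallBelow_of_mem_smallAbove (h.subset hD) (h.mem_of_notMem x hx)
      simp [top, hx, hφx, (lt_of_mem_smallBelow (h.mem_of_notMem x hx) hv).le]
  exact hcomp ▸ (IsJProduct.of_isJ htop).comp hψ

theorem isJProduct_of_eventually_const [Infinite X] [DecidablePred (· ∈ D)] (h : IsLowOff D φ)
    (hφD : ∀ d ∈ D, φ d = d) {u : X} (huB : u ∉ smallBelow X) (huA : u ∉ smallAbove X)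
    (hconst : ∀ x ∉ D, u ≤ x → φ x = φ u) : IsJProduct φ := by
  have hDu : ∀ d ∈ D, u < d := fun d hd => lt_of_mem_smallAbove (h.subset hd) huA
  set γ : X → X := D.piecewise id (fun x => min x u)
  set β : X → X := fun z => if z ≤ u then φ z else z
  have hγ : IsJ γ := by
    refine .of_subset_range (fun x y hxy => ?_) (fun z (hz : z ≤ u) => ⟨z, ?_⟩) (mk_Iic_eq huB)
    · by_cases hx : x ∈ D
      · simpa [γ, hx, h.upper hxy hx] using hxy
      · by_cases hy : y ∈ D
        · simpa [γ, hx, hy] using (min_le_left _ _).trans hxy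
        · simpa [γ, hx, hy] using min_le_min_right _ hxy
    · have hzD : z ∉ D := fun hD => (hDu z hD).not_ge hz
      simp [γ, hzD, hz]
  have hβ : IsJ β := by
    refine .of_subset_range (fun x y hxy => ?_) (fun z (hz : u < z) => ⟨z, if_neg hz.not_ge⟩)
      (mk_Ioi_eq huA)
    simp only [β]
    split_ifs with hx hy hy
    · exact h.mono hxy
    · have hxD : x ∉ D := fun hD => (hDu x hD).not_ge hx
      exact ((lt_of_mem_smallBelow (h.mem_of_notMem x hxD) huB).trans (not_le.1 hy)).le
    · exact absurd (hxy.trans hy) hx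
    · exact hxy
  have hcomp : β ∘ γ = φ := by
    funext x
    by_cases hx : x ∈ D
    · simp [γ, β, hx, (hDu x hx).not_ge, hφD x hx]
    · rcases le_total x u with hxu | hux
      · simp [γ, β, hx, hxu]
      · simp [γ, β, hx, hux, hconst x hx hux]
  exact hcomp ▸ (IsJProduct.of_isJ hβ).comp (.of_isJ hγ)

theorem update_id_comp (h : IsLowOff D φ) {c m : X} (hc : c ∈ smallBelow X)
    (hmax : ∀ x ∉ D, φ x ≤ c) (hfib : φ ⁻¹' {c} ⊆ smallAbove X) (hm : m ∉ smallBelow X)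
    (hgap : ∀ x, φ x ≤ m → φ x ≤ c) :
    IsLowOff (D ∪ φ ⁻¹' {c}) (Function.update id c m ∘ φ) where
  subset := union_subset h.subset hfib
  upper x y hxy := by
    rintro (hx | (hx : φ x = c))
    · exact .inl (h.upper hxy hx)
    · by_cases hy : y ∈ D
      · exact .inl hy
      · exact .inr (le_antisymm (hmax y hy) (hx ▸ h.mono hxy))
  mono := h.mono.update_id_comp (lt_of_mem_smallBelow hc hm).le hgap
  mem_of_notMem x hx := by
    obtain ⟨hxD, hxc : φ x ≠ c⟩ := not_or.1 hx
    simpa [Function.update_apply, hxc] using h.mem_of_notMem x hxD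
  notMem_of_mem x hx := by
    by_cases hxc : φ x = c
    · simpa [Function.update_apply, hxc] using hm
    · have hxD : x ∈ D := hx.resolve_right hxc
      simpa [Function.update_apply, hxc] using h.notMem_of_mem x hxD

theorem isJProduct [Infinite X] (hB : (smallBelow X).Finite) (hA : (smallAbove X).Finite)
    (h : IsLowOff D φ) : IsJProduct φ := by
  classical
  induction hn : (smallAbove X \ D).ncard using Nat.strong_induction_on generalizing D φ with
  | _ n ih =>
  obtain ⟨v, hv, hvD⟩ := exists_notMem_forall_le_image hB (hA.subset h.subset) h.notMem_of_mem
  refine h.isJProduct_of_piecewise_id hA hv hvD ?_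
  set ψ := D.piecewise id φ
  have hψ : IsLowOff D ψ := h.piecewise_id
  have hψD : ∀ d ∈ D, ψ d = d := fun d hd => piecewise_eq_of_mem _ _ _ hd
  obtain ⟨_, ⟨g, hgD, rfl⟩, hmax⟩ := exists_max_image (ψ '' Dᶜ) id
    (hB.subset (image_subset_iff.2 hψ.mem_of_notMem))
    ((hA.subset h.subset).infinite_compl.nonempty.image ψ)
  replace hmax : ∀ x ∉ D, ψ x ≤ ψ g := fun x hx => hmax _ (mem_image_of_mem ψ hx)
  by_cases hnice : ∃ u, u ∉ smallBelow X ∧ u ∉ smallAbove X ∧ ψ u = ψ g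
  · obtain ⟨u, huB, huA, hu⟩ := hnice
    exact hψ.isJProduct_of_eventually_const hψD huB huA fun x hx hux =>
      le_antisymm (hu ▸ hmax x hx) (hψ.mono hux)
  push Not at hnice
  have hfib : ψ ⁻¹' {ψ g} ⊆ smallAbove X := by
    intro x (hx : ψ x = ψ g)
    by_contra hxA
    obtain ⟨u, hxu, huB, huA⟩ := exists_ge_notMem_smallBelow_notMem_smallAbove hB hA hxA
    refine hnice u huB huA (le_antisymm (hmax u fun hD => huA (h.subset hD)) ?_)
    exact hx ▸ hψ.mono hxu
  obtain ⟨m, hm⟩ := (hB.union hA).infinite_compl.nonempty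
  obtain ⟨hmB, hmA⟩ := not_or.1 hm
  have hgap : ∀ x, ψ x ≤ m → ψ x ≤ ψ g := fun x hxm => by
    by_cases hx : x ∈ D
    · exact absurd hxm (by simpa [hψD x hx] using lt_of_mem_smallAbove (h.subset hx) hmA)
    · exact hmax x hx
  have hc := hψ.mem_of_notMem g hgD
  refine IsJProduct.of_update_id_comp (lt_of_mem_smallBelow hc hmB).le hmA hgap
    (ih _ ?_ (hψ.update_id_comp hc hmax hfib hmB hgap) rfl)
  rw [← hn]
  refine ncard_lt_ncard ((ssubset_iff_of_subset (sdiff_subset_sdiff_right subset_union_left)).2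
    ⟨g, ⟨hfib rfl, hgD⟩, fun hg => hg.2 (.inr rfl)⟩) hA.sdiff

end IsLowOff

theorem isJProduct_of_le_id [Infinite X] (hB : (smallBelow X).Finite) (hA : (smallAbove X).Finite)
    {δ : X → X} (hδ : Monotone δ) (hle : ∀ x, δ x ≤ x) : IsJProduct δ := by
  by_cases h : ∃ b, b ∉ smallAbove X ∧ δ b ∉ smallBelow X
  · obtain ⟨b, hb, hδb⟩ := h
    exact isJProduct_of_le_id_of_apply_notMem hδ hle hb hδb
  push Not at h
  refine IsLowOff.isJProduct (D := {x | δ x ∉ smallBelow X}) hB hA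
    ⟨fun x hx => by_contra fun hxA => hx (h x hxA), fun x y hxy hx hy => hx ?_, hδ,
      fun x hx => not_not.1 hx, fun x hx => hx⟩
  exact isLowerSet_smallBelow (hδ hxy) hy

theorem isJProduct_of_id_le [Infinite X] (hB : (smallBelow X).Finite) (hA : (smallAbove X).Finite)
    {ε : X → X} (hε : Monotone ε) (hge : ∀ x, x ≤ ε x) : IsJProduct ε :=
  have : Infinite Xᵒᵈ := ‹Infinite X›
  (isJProduct_of_le_id (X := Xᵒᵈ) hA hB hε.dual hge).ofDual

end Decomposition

end OrderPreservingMaps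

open OrderPreservingMaps

theorem stmt_18 {X : Type*} [LinearOrder X] [Infinite X]
    (hfin : {x : X | ¬ (Cardinal.mk ↥(Set.Iic x) = Cardinal.mk X ∧
      Cardinal.mk ↥(Set.Ici x) = Cardinal.mk X)}.Finite)
    (α : X → X) (hα : Monotone α) :
    ∃ l : List (X → X), l ≠ [] ∧
      (∀ f ∈ l, Monotone f ∧ Cardinal.mk ↥(Set.range f) = Cardinal.mk X) ∧
      α = l.foldr (· ∘ ·) id := by
  have hB : (smallBelow X).Finite := hfin.subset fun x hx h => hx.ne h.1
  have hA : (smallAbove X).Finite := hfin.subset fun x hx h => hx.ne h.2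
  have hδ := isJProduct_of_le_id hB hA (hα.min monotone_id) fun x => min_le_right (α x) x
  have hε := isJProduct_of_id_le hB hA (hα.max monotone_id) fun x => le_max_right (α x) x
  exact hα.max_id_comp_min_id ▸ (hε.comp hδ).exists_list
end

section
/- Let X be an infinite chain, α an order-preserving self-map of X, and u, v ∈ X^0 with α(u) = v. Then there exist order-preserving self-maps α₁, α₂ of X, each with image of cardinality |X|, such that α = α₁α₂ (α₁ applied first). -/
lemma card_range_of_subset {X : Type*} (f : X → X) (S : Set X)
    (hsub : S ⊆ Set.range f) (hS : Cardinal.mk ↥S = Cardinal.mk X) :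
    Cardinal.mk ↥(Set.range f) = Cardinal.mk X :=
  le_antisymm Cardinal.mk_range_le (hS ▸ Cardinal.mk_le_mk_of_subset hsub)

theorem stmt_19 {X : Type*} [LinearOrder X] [Infinite X]
    (α : X → X) (hα : Monotone α) (u v : X)
    (hu : Cardinal.mk ↥(Set.Iic u) = Cardinal.mk X ∧ Cardinal.mk ↥(Set.Ici u) = Cardinal.mk X)
    (hv : Cardinal.mk ↥(Set.Iic v) = Cardinal.mk X ∧ Cardinal.mk ↥(Set.Ici v) = Cardinal.mk X)
    (huv : α u = v) :
    ∃ α₁ α₂ : X → X, Monotone α₁ ∧ Monotone α₂ ∧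
      Cardinal.mk ↥(Set.range α₁) = Cardinal.mk X ∧
      Cardinal.mk ↥(Set.range α₂) = Cardinal.mk X ∧
      α = α₂ ∘ α₁ := by
  rcases le_or_gt u v with huv' | huv'
  · -- u ≤ v
    refine ⟨fun x => if x ≤ u then x else α x,
            fun t => if t ≤ u then α t else max t v, ?_, ?_, ?_, ?_, ?_⟩
    · intro x y hxy
      by_cases hy : y ≤ u
      · simp [le_trans hxy hy, hy, hxy]
      · by_cases hx : x ≤ u
        · simp only [hx, hy, if_true, if_false]
          exact le_trans (le_trans hx (huv ▸ huv')) (hα (le_of_not_ge hy))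
        · simp only [hx, hy, if_false]; exact hα hxy
    · intro t s hts
      by_cases hs : s ≤ u
      · simp only [le_trans hts hs, hs, if_true]; exact hα hts
      · by_cases ht : t ≤ u
        · simp only [ht, hs, if_true, if_false]
          exact le_trans (huv ▸ hα ht) (le_max_right s v)
        · simp only [ht, hs, if_false]; exact max_le_max hts le_rfl
    · refine card_range_of_subset _ (Set.Iic u) ?_ hu.1
      intro x hx; exact ⟨x, by simp [Set.mem_Iic.mp hx]⟩
    · refine card_range_of_subset _ (Set.Ici v) ?_ hv.2
      intro s hs
      have hs' : v ≤ s := hs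
      by_cases h : s ≤ u
      · have h1 : s = u := le_antisymm h (le_trans huv' hs')
        have h2 : v = s := le_antisymm hs' (le_trans h1.le huv')
        exact ⟨u, by simp [huv, h2, h1]⟩
      · exact ⟨s, by simp [h, max_eq_left hs']⟩
    · funext x
      by_cases hx : x ≤ u
      · simp [hx]
      · have h1 : v ≤ α x := huv ▸ hα (le_of_not_ge hx)
        simp only [Function.comp_apply, hx, if_false]
        by_cases h2 : α x ≤ u
        · have h3 : α x = u := le_antisymm h2 (le_trans huv' h1)
          have h4 : u = v := le_antisymm huv' (h3 ▸ h1)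
          simp [h2, h3, huv, ← h4]
        · simp [h2, max_eq_left h1]
  · -- v < u
    refine ⟨fun x => if u ≤ x then x else α x,
            fun t => if u ≤ t then α t else min t v, ?_, ?_, ?_, ?_, ?_⟩
    · intro x y hxy
      by_cases hx : u ≤ x
      · simp [hx, le_trans hx hxy, hxy]
      · by_cases hy : u ≤ y
        · simp only [hx, hy, if_true, if_false]
          exact le_trans (huv ▸ hα (le_of_not_ge hx)) (le_trans huv'.le hy)
        · simp only [hx, hy, if_false]; exact hα hxy
    · intro t s hts
      by_cases ht : u ≤ t
      · simp only [ht, le_trans ht hts, if_true]; exact hα hts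
      · by_cases hs : u ≤ s
        · simp only [ht, hs, if_true, if_false]
          exact le_trans (min_le_right t v) (huv ▸ hα hs)
        · simp only [ht, hs, if_false]; exact min_le_min hts le_rfl
    · refine card_range_of_subset _ (Set.Ici u) ?_ hu.2
      intro x hx; exact ⟨x, by simp [Set.mem_Ici.mp hx]⟩
    · refine card_range_of_subset _ (Set.Iic v) ?_ hv.1
      intro s hs
      have hs' : s ≤ v := hs
      have h : ¬ u ≤ s := not_le.mpr (lt_of_le_of_lt hs' huv')
      exact ⟨s, by simp [h, min_eq_left hs']⟩
    · funext x
      by_cases hx : u ≤ x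
      · simp [hx]
      · have h1 : α x ≤ v := huv ▸ hα (le_of_not_ge hx)
        have h2 : ¬ u ≤ α x := not_le.mpr (lt_of_le_of_lt h1 huv')
        simp [Function.comp_apply, hx, h2, min_eq_left h1]
end
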